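/- arXiv:2302.06128 — 2 statements merged into one kernel-verified Lean document; each statement's English description precedes it below -/
import Mathlib

section
/- Assume: (1) a(t) < 0 for almost every t ∈ [t₀, T]; (2) the function t ↦ b(t)²/a(t) is Lebesgue integrable on [t₀, T]; (3) for all t ∈ [t₀, T], ∫_{t₀}^{t} exp(∫_{t₀}^{τ} [c(s) − b(s)²/a(s)] ds)·d(τ) dτ ≥ 0; (4) there is a differentiable function η : [t₀, T] → ℝ with η′(t) + a(t)η(t)³ + b(t)η(t)² + c(t)η(t) + d(t) ≤ 0 for all t ∈ [t₀, T] and η(t₀) ≤ η(T) < 0. Then the Abel equation (1.1) has a closed solution y on [t₀, T] with y(t) ≤ 0 for all t ∈ [t₀, T]. -/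
/-!
The field is clamped outside a strip `|y| ≤ R`, which makes it bounded and globally Lipschitz,
so every initial value has a solution on `[t₀, T]` and comparison with sub- and supersolutions
holds. The subsolution `η` stays below every solution starting above `η t₀`, and the solution `z`
starting at `0` stays nonpositive; so the Poincaré map `x ↦ y_x(T)` has a fixed point in
`[η t₀, 0]`, whose solution lies between `η` and `z`, where the clamping is inactive.

That `z ≤ 0` is where the integral hypotheses enter: for `y ≤ 0` and `a < 0`,
`a y³ + b y² ≥ -(b²/a) y`, so `z` is dominated by the solution of the linear equation
`u' + (c - b²/a) u + d = 0`, `u t₀ = 0`, which is `-exp(-∫(c - b²/a)) ∫ exp(∫(c - b²/a)) d ≤ 0`.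
Since `b²/a` is merely integrable, `a` is replaced by `a - θ`; the resulting error tends to `0`
with `θ`.
-/

open Set MeasureTheory intervalIntegral

/-- The right-hand side `-(a y³ + b y² + c y + d)` of the Abel equation (1.1). -/
noncomputable def abelRHS (a b c d y : ℝ → ℝ) (t : ℝ) : ℝ :=
  -(a t * y t ^ 3 + b t * y t ^ 2 + c t * y t + d t)

/-- `y` is a solution of the Abel equation `y' + a y³ + b y² + c y + d = 0` on the set `S`. -/
def IsAbelSolOn (a b c d y : ℝ → ℝ) (S : Set ℝ) : Prop :=
  ∀ t ∈ S, HasDerivWithinAt y (abelRHS a b c d y t) S t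

/-- The set of real points of the interval `[t₀, τ)`, `τ` an extended real. -/
def eIco (t₀ : ℝ) (τ : EReal) : Set ℝ := {t : ℝ | t₀ ≤ t ∧ (t : EReal) < τ}

/-- A solution `y` of the Abel equation on `[t₀, t₁) ⊆ [t₀, τ₀)` is noncontinuable if it
cannot be extended to the right as a solution on a larger subinterval of `[t₀, τ₀)`. -/
def Noncontinuable (a b c d : ℝ → ℝ) (t₀ : ℝ) (τ₀ t₁ : EReal) (y : ℝ → ℝ) : Prop :=
  ¬ ∃ (t₂ : EReal) (z : ℝ → ℝ), t₁ < t₂ ∧ t₂ ≤ τ₀ ∧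
      IsAbelSolOn a b c d z (eIco t₀ t₂) ∧ EqOn z y (eIco t₀ t₁)

open Filter Topology
open scoped NNReal

section Comparison

variable {F : ℝ → ℝ → ℝ} {s : Set ℝ} {y : ℝ → ℝ}

def IsLowerSolOn (F : ℝ → ℝ → ℝ) (s : Set ℝ) (y : ℝ → ℝ) : Prop :=
  ∀ t ∈ s, ∃ v, HasDerivWithinAt y v s t ∧ v ≤ F t (y t)

def IsUpperSolOn (F : ℝ → ℝ → ℝ) (s : Set ℝ) (y : ℝ → ℝ) : Prop :=
  ∀ t ∈ s, ∃ v, HasDerivWithinAt y v s t ∧ F t (y t) ≤ v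

theorem isLowerSolOn_of_hasDerivWithinAt (hy : ∀ t ∈ s, HasDerivWithinAt y (F t (y t)) s t) :
    IsLowerSolOn F s y :=
  fun t ht => ⟨_, hy t ht, le_rfl⟩

theorem isUpperSolOn_of_hasDerivWithinAt (hy : ∀ t ∈ s, HasDerivWithinAt y (F t (y t)) s t) :
    IsUpperSolOn F s y :=
  fun t ht => ⟨_, hy t ht, le_rfl⟩

theorem IsLowerSolOn.of_le {G : ℝ → ℝ → ℝ} (hy : IsLowerSolOn F s y)
    (hFG : ∀ t ∈ s, F t (y t) ≤ G t (y t)) : IsLowerSolOn G s y :=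
  fun t ht => (hy t ht).imp fun _ hv => ⟨hv.1, hv.2.trans (hFG t ht)⟩

theorem IsUpperSolOn.of_le {G : ℝ → ℝ → ℝ} (hy : IsUpperSolOn F s y)
    (hFG : ∀ t ∈ s, G t (y t) ≤ F t (y t)) : IsUpperSolOn G s y :=
  fun t ht => (hy t ht).imp fun _ hv => ⟨hv.1, (hFG t ht).trans hv.2⟩

theorem IsLowerSolOn.continuousOn (hy : IsLowerSolOn F s y) : ContinuousOn y s :=
  fun t ht => (hy t ht).elim fun _ hv => hv.1.continuousWithinAt

theorem HasDerivWithinAt.Ici_of_Icc {t₀ T t v : ℝ} (h : HasDerivWithinAt y v (Icc t₀ T) t)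
    (ht : t ∈ Ico t₀ T) : HasDerivWithinAt y v (Ici t) t :=
  h.mono_of_mem_nhdsWithin (Icc_mem_nhdsGE_of_mem ht)

theorem LipschitzWith.sub_le_mul_sub {K : ℝ≥0} {f : ℝ → ℝ} (hf : LipschitzWith K f) {x y : ℝ}
    (hxy : y ≤ x) : f x - f y ≤ K * (x - y) := by
  have := hf.dist_le_mul x y
  rw [Real.dist_eq, Real.dist_eq, abs_of_nonneg (sub_nonneg.2 hxy)] at this
  exact (le_abs_self _).trans this

theorem gronwallBound_nonneg {δ K ε x : ℝ} (hδ : 0 ≤ δ) (hK : 0 ≤ K) (hε : 0 ≤ ε) (hx : 0 ≤ x) :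
    0 ≤ gronwallBound δ K ε x :=
  hδ.trans <| (gronwallBound_x0 δ K ε).symm.le.trans (gronwallBound_mono hδ hε hK hx)

theorem gronwallBound_continuous_δε (K x : ℝ) :
    Continuous fun p : ℝ × ℝ => gronwallBound p.1 K p.2 x := by
  by_cases hK : K = 0
  · simp only [gronwallBound_K0, hK]
    fun_prop
  · simp only [gronwallBound_of_K_ne_0 hK]
    fun_prop

variable {K : ℝ≥0} {t₀ T δ ε : ℝ} {α β : ℝ → ℝ}

theorem IsLowerSolOn.sub_le_gronwallBound (hF : ∀ t ∈ Ico t₀ T, LipschitzWith K (F t))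
    (hα : IsLowerSolOn F (Icc t₀ T) α) (hβ : IsUpperSolOn (fun t x => F t x - ε) (Icc t₀ T) β)
    (hδ : 0 ≤ δ) (hε : 0 ≤ ε) (h₀ : α t₀ - β t₀ ≤ δ) :
    ∀ t ∈ Icc t₀ T, α t - β t ≤ gronwallBound δ K ε (t - t₀) := by
  choose! α' hα' hα'F using hα
  choose! β' hβ' hβ'F using hβ
  have hcont : ContinuousOn (fun t => α t - β t) (Icc t₀ T) :=
    fun t ht => ((hα' t ht).sub (hβ' t ht)).continuousWithinAt
  -- With `ε + η` in place of `ε` the derivative inequality is strict at a first contact with the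
  -- bound, which is what the fencing theorem needs; `η → 0` at the end.
  have perturbed : ∀ η > 0, ∀ t ∈ Icc t₀ T, α t - β t ≤ gronwallBound δ K (ε + η) (t - t₀) := by
    intro η hη
    refine image_le_of_deriv_right_lt_deriv_boundary' hcont
      (fun t ht => ((hα' t (Ico_subset_Icc_self ht)).sub
        (hβ' t (Ico_subset_Icc_self ht))).Ici_of_Icc ht)
      (by rwa [sub_self, gronwallBound_x0])
      (fun t _ => (hasDerivAt_gronwallBound_shift δ K (ε + η) t t₀).continuousAt.continuousWithinAt)
      (fun t _ => (hasDerivAt_gronwallBound_shift δ K (ε + η) t t₀).hasDerivWithinAt) ?_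
    intro t ht heq
    have hβα : β t ≤ α t := sub_nonneg.1 <| heq ▸
      gronwallBound_nonneg hδ K.2 (by positivity) (sub_nonneg.2 ht.1)
    have hlip := (hF t ht).sub_le_mul_sub hβα
    have := hα'F t (Ico_subset_Icc_self ht)
    have := hβ'F t (Ico_subset_Icc_self ht)
    rw [← heq]
    linarith
  intro t ht
  have hlim : Tendsto (fun η => gronwallBound δ K (ε + η) (t - t₀)) (𝓝[>] 0)
      (𝓝 (gronwallBound δ K ε (t - t₀))) := by
    have := ((gronwallBound_continuous_ε δ K (t - t₀)).comp
      (continuous_const_add ε)).continuousWithinAt (s := Ioi 0) (x := 0)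
    simpa [Function.comp_def] using this.tendsto
  exact ge_of_tendsto hlim (eventually_nhdsWithin_of_forall fun η hη => perturbed η hη t ht)

theorem IsLowerSolOn.le_of_isUpperSolOn (hF : ∀ t ∈ Ico t₀ T, LipschitzWith K (F t))
    (hα : IsLowerSolOn F (Icc t₀ T) α) (hβ : IsUpperSolOn F (Icc t₀ T) β) (h₀ : α t₀ ≤ β t₀) :
    ∀ t ∈ Icc t₀ T, α t ≤ β t := by
  intro t ht
  have := hα.sub_le_gronwallBound hF (hβ.of_le fun t _ => (sub_zero _).le) le_rfl le_rfl
    (sub_nonpos.2 h₀) t ht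
  rw [gronwallBound_ε0_δ0] at this
  linarith

theorem IsLowerSolOn.nonpos_of_forall_isUpperSolOn (hF : ∀ t ∈ Ico t₀ T, LipschitzWith K (F t))
    (hα : IsLowerSolOn F (Icc t₀ T) α) (hα₀ : α t₀ ≤ 0)
    (hu : ∀ ε > 0, ∃ u, IsUpperSolOn (fun t x => F t x - ε) (Icc t₀ T) u ∧ -ε ≤ u t₀ ∧
      ∀ t ∈ Icc t₀ T, u t ≤ 0) :
    ∀ t ∈ Icc t₀ T, α t ≤ 0 := by
  intro t ht
  have hbound : ∀ ε > 0, α t ≤ gronwallBound ε K ε (t - t₀) := by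
    intro ε hε
    obtain ⟨u, hu, hu₀, hu_nonpos⟩ := hu ε hε
    have := hα.sub_le_gronwallBound hF hu hε.le hε.le (by linarith) t ht
    linarith [hu_nonpos t ht]
  have hlim : Tendsto (fun ε => gronwallBound ε K ε (t - t₀)) (𝓝[>] 0) (𝓝 0) := by
    have := ((gronwallBound_continuous_δε K (t - t₀)).comp
      (continuous_id.prodMk continuous_id)).continuousWithinAt (s := Ioi 0) (x := 0)
    simpa [Function.comp_def, gronwallBound_ε0_δ0] using this.tendsto
  exact ge_of_tendsto hlim (eventually_nhdsWithin_of_forall hbound)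

theorem sub_le_abs_mul_exp_of_hasDerivWithinAt (hF : ∀ t ∈ Ico t₀ T, LipschitzWith K (F t))
    {y z : ℝ → ℝ} (hy : ∀ t ∈ Icc t₀ T, HasDerivWithinAt y (F t (y t)) (Icc t₀ T) t)
    (hz : ∀ t ∈ Icc t₀ T, HasDerivWithinAt z (F t (z t)) (Icc t₀ T) t) :
    ∀ t ∈ Icc t₀ T, y t - z t ≤ |y t₀ - z t₀| * Real.exp (K * (t - t₀)) := by
  intro t ht
  have := (isLowerSolOn_of_hasDerivWithinAt hy).sub_le_gronwallBound hF
    ((isUpperSolOn_of_hasDerivWithinAt hz).of_le fun t _ => (sub_zero _).le)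
    (abs_nonneg _) le_rfl (le_abs_self _) t ht
  rwa [gronwallBound_ε0] at this

end Comparison

section Existence

variable {E : Type*} [NormedAddCommGroup E] [NormedSpace ℝ E] [CompleteSpace E]

theorem exists_forall_hasDerivWithinAt_Icc {F : ℝ → E → E} {K C : ℝ≥0} {t₀ T : ℝ}
    (hT : t₀ ≤ T) (hFt : ∀ x, ContinuousOn (F · x) (Icc t₀ T))
    (hF : ∀ t ∈ Icc t₀ T, LipschitzWith K (F t)) (hC : ∀ t ∈ Icc t₀ T, ∀ x, ‖F t x‖ ≤ C) (x : E) :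
    ∃ y : ℝ → E, y t₀ = x ∧ ∀ t ∈ Icc t₀ T, HasDerivWithinAt y (F t (y t)) (Icc t₀ T) t :=
  IsPicardLindelof.exists_eq_forall_mem_Icc_hasDerivWithinAt₀ (t₀ := ⟨t₀, left_mem_Icc.2 hT⟩)
    (x₀ := x) (a := C * (T - t₀).toNNReal) (L := C) (K := K)
    { lipschitzOnWith := fun t ht => (hF t ht).lipschitzOnWith
      continuousOn := fun x _ => hFt x
      norm_le := fun t ht x _ => hC t ht x
      mul_max_le := by
        simp [max_eq_left (sub_nonneg.2 hT), Real.coe_toNNReal _ (sub_nonneg.2 hT)] }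

end Existence

section ClosedSolution

variable {F : ℝ → ℝ → ℝ} {K C : ℝ≥0} {t₀ T : ℝ} {η ζ : ℝ → ℝ}

theorem exists_closed_solution_of_isLowerSolOn_of_isUpperSolOn (hT : t₀ ≤ T)
    (hFt : ∀ x, ContinuousOn (F · x) (Icc t₀ T)) (hF : ∀ t ∈ Icc t₀ T, LipschitzWith K (F t))
    (hC : ∀ t ∈ Icc t₀ T, ∀ x, ‖F t x‖ ≤ C)
    (hη : IsLowerSolOn F (Icc t₀ T) η) (hζ : IsUpperSolOn F (Icc t₀ T) ζ) (h₀ : η t₀ ≤ ζ t₀)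
    (hη₁ : η t₀ ≤ η T) (hζ₁ : ζ T ≤ ζ t₀) :
    ∃ y : ℝ → ℝ, (∀ t ∈ Icc t₀ T, HasDerivWithinAt y (F t (y t)) (Icc t₀ T) t) ∧ y t₀ = y T ∧
      ∀ t ∈ Icc t₀ T, η t ≤ y t ∧ y t ≤ ζ t := by
  have hF' : ∀ t ∈ Ico t₀ T, LipschitzWith K (F t) := fun t ht => hF t (Ico_subset_Icc_self ht)
  have hTmem : T ∈ Icc t₀ T := right_mem_Icc.2 hT
  choose sol hsol₀ hsol using exists_forall_hasDerivWithinAt_Icc hT hFt hF hC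
  have hPoincare : LipschitzWith (Real.exp (K * (T - t₀))).toNNReal fun x => sol x T := by
    refine LipschitzWith.of_dist_le_mul fun x x' => ?_
    rw [Real.coe_toNNReal _ (Real.exp_pos _).le, Real.dist_eq, Real.dist_eq, abs_sub_le_iff]
    have h₁ := sub_le_abs_mul_exp_of_hasDerivWithinAt hF' (hsol x) (hsol x') T hTmem
    have h₂ := sub_le_abs_mul_exp_of_hasDerivWithinAt hF' (hsol x') (hsol x) T hTmem
    rw [hsol₀, hsol₀] at h₁ h₂
    rw [abs_sub_comm x' x] at h₂
    constructor <;> linarith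
  have hlower : ∀ x, η t₀ ≤ x → ∀ t ∈ Icc t₀ T, η t ≤ sol x t := fun x hx =>
    hη.le_of_isUpperSolOn hF' (isUpperSolOn_of_hasDerivWithinAt (hsol x)) ((hsol₀ x).symm ▸ hx)
  have hupper : ∀ x, x ≤ ζ t₀ → ∀ t ∈ Icc t₀ T, sol x t ≤ ζ t := fun x hx =>
    (isLowerSolOn_of_hasDerivWithinAt (hsol x)).le_of_isUpperSolOn hF' hζ ((hsol₀ x).symm ▸ hx)
  obtain ⟨x, hx, hfix⟩ := exists_mem_Icc_isFixedPt hPoincare.continuous.continuousOn h₀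
    (hη₁.trans (hlower _ le_rfl T hTmem)) ((hupper _ le_rfl T hTmem).trans hζ₁)
  exact ⟨sol x, hsol x, (hsol₀ x).trans hfix.symm,
    fun t ht => ⟨hlower x hx.1 t ht, hupper x hx.2 t ht⟩⟩

end ClosedSolution

section AbelField

def abelField (a b c d : ℝ → ℝ) (t x : ℝ) : ℝ :=
  -(a t * x ^ 3 + b t * x ^ 2 + c t * x + d t)

variable {a b c d : ℝ → ℝ} {s : Set ℝ}

theorem abs_abelField_sub_le {t M R x y : ℝ} (ha : |a t| ≤ M) (hb : |b t| ≤ M) (hc : |c t| ≤ M)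
    (hx : |x| ≤ R) (hy : |y| ≤ R) :
    |abelField a b c d t x - abelField a b c d t y| ≤ M * (3 * R ^ 2 + 2 * R + 1) * |x - y| := by
  have hsq : |x ^ 2 + x * y + y ^ 2| ≤ 3 * R ^ 2 := by
    have := abs_le.1 hx
    have := abs_le.1 hy
    rw [abs_le]
    constructor <;> nlinarith [abs_nonneg x]
  have hlin : |x + y| ≤ 2 * R := (abs_add_le x y).trans (by linarith)
  have hM : 0 ≤ M := (abs_nonneg _).trans hc
  rw [show abelField a b c d t x - abelField a b c d t y =
      -(a t * (x ^ 2 + x * y + y ^ 2) + b t * (x + y) + c t) * (x - y) by unfold abelField; ring,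
    abs_mul, abs_neg]
  gcongr
  calc |a t * (x ^ 2 + x * y + y ^ 2) + b t * (x + y) + c t|
      ≤ |a t| * |x ^ 2 + x * y + y ^ 2| + |b t| * |x + y| + |c t| := by
        rw [← abs_mul, ← abs_mul]; exact abs_add_three _ _ _
    _ ≤ M * (3 * R ^ 2) + M * (2 * R) + M := by gcongr
    _ = M * (3 * R ^ 2 + 2 * R + 1) := by ring

theorem abs_max_neg_min_le {R : ℝ} (hR : 0 ≤ R) (x : ℝ) : |max (-R) (min x R)| ≤ R :=
  abs_le.2 ⟨le_max_left _ _, max_le (by linarith) (min_le_right _ _)⟩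

def clampedAbelField (a b c d : ℝ → ℝ) (R t x : ℝ) : ℝ :=
  abelField a b c d t (max (-R) (min x R))

theorem clampedAbelField_of_mem {R t x : ℝ} (h₁ : -R ≤ x) (h₂ : x ≤ R) :
    clampedAbelField a b c d R t x = abelField a b c d t x := by
  rw [clampedAbelField, min_eq_left h₂, max_eq_right h₁]

theorem continuousOn_clampedAbelField (ha : ContinuousOn a s) (hb : ContinuousOn b s)
    (hc : ContinuousOn c s) (hd : ContinuousOn d s) (R x : ℝ) :
    ContinuousOn (clampedAbelField a b c d R · x) s := by
  unfold clampedAbelField abelField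
  fun_prop

theorem exists_lipschitzWith_clampedAbelField (hs : IsCompact s) (ha : ContinuousOn a s)
    (hb : ContinuousOn b s) (hc : ContinuousOn c s) (hd : ContinuousOn d s) {R : ℝ} (hR : 0 ≤ R) :
    ∃ K C : ℝ≥0, ∀ t ∈ s, LipschitzWith K (clampedAbelField a b c d R t) ∧
      ∀ x, ‖clampedAbelField a b c d R t x‖ ≤ C := by
  obtain ⟨M, hM⟩ := hs.exists_bound_of_continuousOn
    (f := fun t => |a t| + |b t| + |c t| + |d t|) (by fun_prop)
  set L := M * (3 * R ^ 2 + 2 * R + 1)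
  refine ⟨L.toNNReal, (L * R + M).toNNReal, fun t ht => ?_⟩
  have hMt := (le_abs_self _).trans (hM t ht)
  have := abs_nonneg (a t); have := abs_nonneg (b t); have := abs_nonneg (c t)
  have := abs_nonneg (d t)
  have hL : 0 ≤ L := mul_nonneg (by linarith) (by positivity)
  have hcubic : ∀ u v, |u| ≤ R → |v| ≤ R →
      |abelField a b c d t u - abelField a b c d t v| ≤ L * |u - v| := fun u v hu hv =>
    abs_abelField_sub_le (by linarith) (by linarith) (by linarith) hu hv
  unfold clampedAbelField
  refine ⟨LipschitzWith.of_dist_le_mul fun x y => ?_, fun x => ?_⟩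
  · have hclamp : |max (-R) (min x R) - max (-R) (min y R)| ≤ |x - y| := by
      simpa [Real.dist_eq] using
        ((LipschitzWith.id.min_const R).const_max (-R)).dist_le_mul x y
    rw [Real.dist_eq, Real.dist_eq]
    calc _ ≤ L * |max (-R) (min x R) - max (-R) (min y R)| :=
          hcubic _ _ (abs_max_neg_min_le hR x) (abs_max_neg_min_le hR y)
      _ ≤ L.toNNReal * |x - y| := by gcongr; exact Real.le_coe_toNNReal L
  · have h₀ := hcubic _ 0 (abs_max_neg_min_le hR x) (by simpa using hR)
    have hd₀ : |abelField a b c d t 0| ≤ M := by simp [abelField]; linarith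
    rw [sub_zero] at h₀
    rw [Real.norm_eq_abs]
    refine le_trans ?_ (Real.le_coe_toNNReal _)
    have := abs_sub_abs_le_abs_sub (abelField a b c d t (max (-R) (min x R)))
      (abelField a b c d t 0)
    have := mul_le_mul_of_nonneg_left (abs_max_neg_min_le hR x) hL
    linarith

end AbelField

section LinearEquation

variable {p q : ℝ → ℝ} {t₀ T τ : ℝ}

theorem ContinuousOn.hasDerivWithinAt_integral_Icc {g : ℝ → ℝ} (hg : ContinuousOn g (Icc t₀ T))
    (hτ : τ ∈ Icc t₀ T) : HasDerivWithinAt (fun t => ∫ s in t₀..t, g s) (g τ) (Icc t₀ T) τ := by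
  have : Fact (τ ∈ Icc t₀ T) := ⟨hτ⟩
  exact intervalIntegral.integral_hasDerivWithinAt_right
    ((hg.mono (uIcc_subset_Icc (left_mem_Icc.2 (hτ.1.trans hτ.2)) hτ)).intervalIntegrable)
    (hg.stronglyMeasurableAtFilter_nhdsWithin measurableSet_Icc τ) (hg τ hτ)

/-- Variation of constants: the solution of `u' + p u + q = 0` with `u t₀ = u₀`. -/
noncomputable def linearSol (p q : ℝ → ℝ) (t₀ u₀ t : ℝ) : ℝ :=
  Real.exp (-∫ s in t₀..t, p s) * (u₀ - ∫ s in t₀..t, Real.exp (∫ r in t₀..s, p r) * q s)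

theorem linearSol_self (u₀ : ℝ) : linearSol p q t₀ u₀ t₀ = u₀ := by
  simp [linearSol]

theorem hasDerivWithinAt_linearSol (hp : ContinuousOn p (Icc t₀ T)) (hq : ContinuousOn q (Icc t₀ T))
    (u₀ : ℝ) (hτ : τ ∈ Icc t₀ T) :
    HasDerivWithinAt (linearSol p q t₀ u₀) (-p τ * linearSol p q t₀ u₀ τ - q τ) (Icc t₀ T) τ := by
  have hP : ∀ t ∈ Icc t₀ T, HasDerivWithinAt (fun t => ∫ s in t₀..t, p s) (p t) (Icc t₀ T) t :=
    fun t ht => hp.hasDerivWithinAt_integral_Icc ht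
  have hW : ContinuousOn (fun s => Real.exp (∫ r in t₀..s, p r) * q s) (Icc t₀ T) :=
    (ContinuousOn.rexp fun t ht => (hP t ht).continuousWithinAt).mul hq
  refine (((hP τ hτ).neg.exp).mul
    ((hW.hasDerivWithinAt_integral_Icc hτ).const_sub u₀)).congr_deriv ?_
  simp only [linearSol, Pi.neg_apply, Real.exp_neg]
  field_simp
  ring

end LinearEquation

section Estimates

variable {t₀ T τ : ℝ}

theorem abs_intervalIntegral_le_integral_Icc {g : ℝ → ℝ} (hg : IntegrableOn g (Icc t₀ T))
    (hτ : τ ∈ Icc t₀ T) : |∫ s in t₀..τ, g s| ≤ ∫ s in Icc t₀ T, |g s| := by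
  refine (intervalIntegral.abs_integral_le_integral_abs hτ.1).trans ?_
  rw [intervalIntegral.integral_of_le hτ.1]
  exact setIntegral_mono_set hg.abs (ae_of_all _ fun _ => abs_nonneg _)
    (Ioc_subset_Icc_self.trans (Icc_subset_Icc_right hτ.2)).eventuallyLE

theorem MeasureTheory.IntegrableOn.intervalIntegrable_of_mem {g : ℝ → ℝ}
    (hg : IntegrableOn g (Icc t₀ T)) (hτ : τ ∈ Icc t₀ T) : IntervalIntegrable g volume t₀ τ :=
  (intervalIntegrable_iff_integrableOn_Icc_of_le hτ.1).2 (hg.mono_set (Icc_subset_Icc_right hτ.2))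

theorem MeasureTheory.IntegrableOn.continuousOn_intervalIntegral {g : ℝ → ℝ} (hT : t₀ ≤ T)
    (hg : IntegrableOn g (Icc t₀ T)) : ContinuousOn (fun τ => ∫ s in t₀..τ, g s) (Icc t₀ T) := by
  rw [← uIcc_of_le hT] at hg ⊢
  exact intervalIntegral.continuousOn_primitive_interval hg

theorem abs_exp_sub_exp_le {x y P : ℝ} (hx : x ≤ P) (hy : y ≤ P) :
    |Real.exp x - Real.exp y| ≤ Real.exp P * |x - y| := by
  wlog hxy : y ≤ x generalizing x y
  · rw [abs_sub_comm, abs_sub_comm x]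
    exact this hy hx (le_of_not_ge hxy)
  rw [abs_of_nonneg (sub_nonneg.2 (Real.exp_le_exp.2 hxy)), abs_of_nonneg (sub_nonneg.2 hxy)]
  have := Real.add_one_le_exp (y - x)
  calc Real.exp x - Real.exp y = Real.exp x * (1 - Real.exp (y - x)) := by
        rw [Real.exp_sub]; field_simp
    _ ≤ Real.exp x * (x - y) := mul_le_mul_of_nonneg_left (by linarith) (Real.exp_pos x).le
    _ ≤ Real.exp P * (x - y) := by gcongr

variable {p p₁ p₂ q : ℝ → ℝ}

theorem abs_intervalIntegral_exp_mul_le (hp : IntegrableOn p (Icc t₀ T))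
    (hq : ContinuousOn q (Icc t₀ T)) (hτ : τ ∈ Icc t₀ T) :
    |∫ s in t₀..τ, Real.exp (∫ r in t₀..s, p r) * q s| ≤
      Real.exp (∫ s in Icc t₀ T, |p s|) * ∫ s in Icc t₀ T, |q s| := by
  have hT : t₀ ≤ T := hτ.1.trans hτ.2
  have hint : IntegrableOn (fun s => Real.exp (∫ r in t₀..s, p r) * q s) (Icc t₀ T) :=
    ((hp.continuousOn_intervalIntegral hT).rexp.mul hq).integrableOn_Icc
  refine (abs_intervalIntegral_le_integral_Icc hint hτ).trans ?_
  rw [← MeasureTheory.integral_const_mul]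
  refine setIntegral_mono_on hint.abs (hq.integrableOn_Icc.abs.const_mul _) measurableSet_Icc
    fun s hs => ?_
  rw [abs_mul, Real.abs_exp]
  gcongr
  exact (le_abs_self _).trans (abs_intervalIntegral_le_integral_Icc hp hs)

theorem abs_intervalIntegral_exp_mul_sub_le (hp₁ : IntegrableOn p₁ (Icc t₀ T))
    (hp₂ : IntegrableOn p₂ (Icc t₀ T)) (hq : ContinuousOn q (Icc t₀ T)) {P : ℝ}
    (hP₁ : ∫ s in Icc t₀ T, |p₁ s| ≤ P) (hP₂ : ∫ s in Icc t₀ T, |p₂ s| ≤ P) (hτ : τ ∈ Icc t₀ T) :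
    |(∫ s in t₀..τ, Real.exp (∫ r in t₀..s, p₁ r) * q s) -
        ∫ s in t₀..τ, Real.exp (∫ r in t₀..s, p₂ r) * q s| ≤
      Real.exp P * (∫ s in Icc t₀ T, |p₁ s - p₂ s|) * ∫ s in Icc t₀ T, |q s| := by
  have hT : t₀ ≤ T := hτ.1.trans hτ.2
  have hint : ∀ {p}, IntegrableOn p (Icc t₀ T) →
      IntegrableOn (fun s => Real.exp (∫ r in t₀..s, p r) * q s) (Icc t₀ T) := fun hp =>
    ((hp.continuousOn_intervalIntegral hT).rexp.mul hq).integrableOn_Icc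
  rw [← intervalIntegral.integral_sub ((hint hp₁).intervalIntegrable_of_mem hτ)
    ((hint hp₂).intervalIntegrable_of_mem hτ)]
  refine (abs_intervalIntegral_le_integral_Icc ((hint hp₁).sub (hint hp₂)) hτ).trans ?_
  rw [← MeasureTheory.integral_const_mul]
  refine setIntegral_mono_on ((hint hp₁).sub (hint hp₂)).abs
    (hq.integrableOn_Icc.abs.const_mul _) measurableSet_Icc fun s hs => ?_
  have hbound : ∀ {p}, IntegrableOn p (Icc t₀ T) → ∫ s in Icc t₀ T, |p s| ≤ P →
      ∫ r in t₀..s, p r ≤ P := fun hp hP =>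
    (le_abs_self _).trans ((abs_intervalIntegral_le_integral_Icc hp hs).trans hP)
  rw [Pi.sub_apply, ← sub_mul, abs_mul]
  gcongr
  refine (abs_exp_sub_exp_le (hbound hp₁ hP₁) (hbound hp₂ hP₂)).trans ?_
  gcongr
  rw [← intervalIntegral.integral_sub (hp₁.intervalIntegrable_of_mem hs)
    (hp₂.intervalIntegrable_of_mem hs)]
  exact abs_intervalIntegral_le_integral_Icc (hp₁.sub hp₂) hs

end Estimates

section Regularization

theorem abs_sq_div_sub_le {a b θ : ℝ} (ha : a < 0) (hθ : 0 ≤ θ) :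
    |b ^ 2 / (a - θ)| ≤ |b ^ 2 / a| := by
  rw [abs_div, abs_div, abs_of_neg (show a - θ < 0 by linarith), abs_of_neg ha]
  exact div_le_div_of_nonneg_left (abs_nonneg _) (by linarith) (by linarith)

theorem tendsto_integral_abs_sq_div_sub_sub {X : Type*} [MeasurableSpace X] {μ : Measure X}
    {a b : X → ℝ} (ha : AEStronglyMeasurable a μ) (hb : AEStronglyMeasurable b μ)
    (hneg : ∀ᵐ t ∂μ, a t < 0) (hint : Integrable (fun t => b t ^ 2 / a t) μ) :
    Tendsto (fun θ => ∫ t, |b t ^ 2 / (a t - θ) - b t ^ 2 / a t| ∂μ) (𝓝[>] 0) (𝓝 0) := by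
  suffices Tendsto (fun θ => ∫ t, |b t ^ 2 / (a t - θ) - b t ^ 2 / a t| ∂μ) (𝓝[>] 0)
      (𝓝 (∫ _, (0 : ℝ) ∂μ)) by simpa
  refine tendsto_integral_filter_of_dominated_convergence (fun t => 2 * |b t ^ 2 / a t|)
    (Eventually.of_forall fun θ => ?_) (eventually_nhdsWithin_of_forall fun θ hθ => ?_)
    (hint.abs.const_mul 2) ?_
  · exact (((hb.pow 2).div₀ (ha.sub aestronglyMeasurable_const)).sub hint.1).norm
  · filter_upwards [hneg] with t ht
    rw [Real.norm_eq_abs, abs_abs, two_mul]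
    linarith [abs_sub (b t ^ 2 / (a t - θ)) (b t ^ 2 / a t),
      abs_sq_div_sub_le (b := b t) ht (le_of_lt hθ)]
  · filter_upwards [hneg] with t ht
    have : ContinuousAt (fun θ => |b t ^ 2 / (a t - θ) - b t ^ 2 / a t|) 0 :=
      ((continuousAt_const.div (continuousAt_const.sub continuousAt_id)
        (by simpa using ht.ne)).sub continuousAt_const).abs
    simpa using this.tendsto.mono_left nhdsWithin_le_nhds

end Regularization

section UpperSolution

variable {t₀ T : ℝ}

theorem ContinuousOn.nonpos_of_ae_neg {a : ℝ → ℝ} (hT : t₀ < T) (ha : ContinuousOn a (Icc t₀ T))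
    (haneg : ∀ᵐ t ∂(volume.restrict (Icc t₀ T)), a t < 0) : ∀ t ∈ Icc t₀ T, a t ≤ 0 := by
  have heq : EqOn a (fun t => min (a t) 0) (Icc t₀ T) :=
    Measure.eqOn_of_ae_eq (haneg.mono fun t ht => (min_eq_left ht.le).symm) ha
      (by fun_prop) (by rw [interior_Icc, closure_Ioo hT.ne])
  exact fun t ht => (heq ht).trans_le (min_le_right _ _)

theorem linearSol_mem_Icc {p p₀ q : ℝ → ℝ} (hp : IntegrableOn p (Icc t₀ T))
    (hp₀ : IntegrableOn p₀ (Icc t₀ T)) (hq : ContinuousOn q (Icc t₀ T)) {P κ : ℝ}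
    (hP : ∫ s in Icc t₀ T, |p s| ≤ P) (hP₀ : ∫ s in Icc t₀ T, |p₀ s| ≤ P)
    (hκ : Real.exp P * (∫ s in Icc t₀ T, |p s - p₀ s|) * ∫ s in Icc t₀ T, |q s| ≤ κ)
    (h₀ : ∀ t ∈ Icc t₀ T, 0 ≤ ∫ s in t₀..t, Real.exp (∫ r in t₀..s, p₀ r) * q s)
    {t : ℝ} (ht : t ∈ Icc t₀ T) :
    linearSol p q t₀ (-κ) t ∈
      Icc (-(Real.exp P * (κ + Real.exp P * ∫ s in Icc t₀ T, |q s|))) 0 := by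
  have hdiff := abs_intervalIntegral_exp_mul_sub_le hp hp₀ hq hP hP₀ ht
  have hbound := abs_intervalIntegral_exp_mul_le hp hq ht
  have hexpP : Real.exp (∫ s in Icc t₀ T, |p s|) ≤ Real.exp P := Real.exp_le_exp.2 hP
  have hexp : Real.exp (-∫ s in t₀..t, p s) ≤ Real.exp P := Real.exp_le_exp.2 <|
    (neg_le_abs _).trans ((abs_intervalIntegral_le_integral_Icc hp ht).trans hP)
  have := h₀ t ht
  have hq₀ : 0 ≤ ∫ s in Icc t₀ T, |q s| :=
    setIntegral_nonneg measurableSet_Icc fun _ _ => abs_nonneg _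
  rw [abs_le] at hdiff hbound
  unfold linearSol
  constructor
  · rw [neg_le, ← mul_neg]
    refine mul_le_mul hexp ?_ (by linarith) (Real.exp_pos P).le
    nlinarith
  · exact mul_nonpos_of_nonneg_of_nonpos (Real.exp_pos _).le (by linarith)

variable {a b c d : ℝ → ℝ}

theorem abelField_le_of_nonpos {t θ φ y R : ℝ} (hA : a t - θ < 0) (hφ : φ * (a t - θ) = b t ^ 2)
    (hθ : 0 ≤ θ) (hy : y ≤ 0) (hR : -R ≤ y) :
    abelField a b c d t y ≤ -(c t - φ) * y - d t + θ * R ^ 3 := by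
  have hquad : (a t - θ) * y ^ 2 + b t * y + φ ≤ 0 := by
    nlinarith [sq_nonneg (2 * (a t - θ) * y + b t), sq_nonneg (b t)]
  have hcube : -R ^ 3 ≤ y ^ 3 := by nlinarith [sq_nonneg y, sq_nonneg (y + R)]
  unfold abelField
  nlinarith [mul_nonneg_of_nonpos_of_nonpos hy hquad, mul_le_mul_of_nonneg_left hcube hθ]

theorem isUpperSolOn_linearSol_abelField (ha₀ : ∀ t ∈ Icc t₀ T, a t ≤ 0)
    (ha : ContinuousOn a (Icc t₀ T)) (hb : ContinuousOn b (Icc t₀ T))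
    (hc : ContinuousOn c (Icc t₀ T)) (hd : ContinuousOn d (Icc t₀ T))
    (haneg : ∀ᵐ t ∂(volume.restrict (Icc t₀ T)), a t < 0)
    (hint : IntegrableOn (fun t => b t ^ 2 / a t) (Icc t₀ T))
    (h₀ : ∀ t ∈ Icc t₀ T,
      0 ≤ ∫ τ in t₀..t, Real.exp (∫ s in t₀..τ, (c s - b s ^ 2 / a s)) * d τ)
    {P R θ κ : ℝ} (hP : (∫ t in Icc t₀ T, |c t|) + ∫ t in Icc t₀ T, |b t ^ 2 / a t| ≤ P)
    (hR : Real.exp P * (1 + Real.exp P * ∫ t in Icc t₀ T, |d t|) ≤ R) (hθ : 0 < θ)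
    (hκ : Real.exp P * (∫ t in Icc t₀ T, |b t ^ 2 / (a t - θ) - b t ^ 2 / a t|) *
      ∫ t in Icc t₀ T, |d t| ≤ κ) (hκ₁ : κ ≤ 1) :
    IsUpperSolOn (fun t x => abelField a b c d t x - θ * R ^ 3) (Icc t₀ T)
        (linearSol (fun t => c t - b t ^ 2 / (a t - θ)) d t₀ (-κ)) ∧
      ∀ t ∈ Icc t₀ T, -R ≤ linearSol (fun t => c t - b t ^ 2 / (a t - θ)) d t₀ (-κ) t ∧
        linearSol (fun t => c t - b t ^ 2 / (a t - θ)) d t₀ (-κ) t ≤ 0 := by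
  set φ := fun t => b t ^ 2 / (a t - θ)
  have hA : ∀ t ∈ Icc t₀ T, a t - θ < 0 := fun t ht => by linarith [ha₀ t ht]
  have hφ : ContinuousOn φ (Icc t₀ T) :=
    (hb.pow 2).div (ha.sub continuousOn_const) fun t ht => (hA t ht).ne
  have hsplit : ∀ g : ℝ → ℝ, IntegrableOn g (Icc t₀ T) →
      (∀ᵐ t ∂(volume.restrict (Icc t₀ T)), |g t| ≤ |b t ^ 2 / a t|) →
      ∫ t in Icc t₀ T, |c t - g t| ≤ P := fun g hg hgφ => by
    refine ((integral_mono_ae (hc.integrableOn_Icc.sub hg).abs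
      (hc.integrableOn_Icc.abs.add hint.abs) ?_).trans
      (integral_add hc.integrableOn_Icc.abs hint.abs).le).trans hP
    filter_upwards [hgφ] with t ht
    show |c t - g t| ≤ |c t| + |b t ^ 2 / a t|
    linarith [abs_sub (c t) (g t)]
  have hPθ := hsplit φ hφ.integrableOn_Icc <| by
    filter_upwards [haneg] with t ht using abs_sq_div_sub_le ht hθ.le
  have hP₀ := hsplit _ hint (ae_of_all _ fun _ => le_rfl)
  have hκ' : Real.exp P * (∫ t in Icc t₀ T, |(c t - φ t) - (c t - b t ^ 2 / a t)|) *
      ∫ t in Icc t₀ T, |d t| ≤ κ := by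
    simpa only [sub_sub_sub_cancel_left, abs_sub_comm (b _ ^ 2 / a _)] using hκ
  set u := linearSol (fun t => c t - φ t) d t₀ (-κ)
  have hu : ∀ t ∈ Icc t₀ T, -R ≤ u t ∧ u t ≤ 0 := fun t ht => by
    have := linearSol_mem_Icc (hc.sub hφ).integrableOn_Icc (hc.integrableOn_Icc.sub hint) hd
      hPθ hP₀ hκ' h₀ ht
    refine ⟨le_trans (neg_le_neg (le_trans ?_ hR)) this.1, this.2⟩
    exact mul_le_mul_of_nonneg_left (by linarith) (Real.exp_pos P).le
  refine ⟨fun t ht => ⟨_, hasDerivWithinAt_linearSol (hc.sub hφ) hd _ ht, ?_⟩, hu⟩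
  have := abelField_le_of_nonpos (b := b) (c := c) (d := d) (hA t ht)
    (div_mul_cancel₀ _ (hA t ht).ne) hθ.le (hu t ht).2 (hu t ht).1
  show abelField a b c d t (u t) - θ * R ^ 3 ≤ -(c t - φ t) * u t - d t
  linarith

theorem exists_isUpperSolOn_abelField (hT : t₀ < T) (ha : ContinuousOn a (Icc t₀ T))
    (hb : ContinuousOn b (Icc t₀ T)) (hc : ContinuousOn c (Icc t₀ T))
    (hd : ContinuousOn d (Icc t₀ T))
    (haneg : ∀ᵐ t ∂(volume.restrict (Icc t₀ T)), a t < 0)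
    (hint : IntegrableOn (fun t => b t ^ 2 / a t) (Icc t₀ T))
    (h₀ : ∀ t ∈ Icc t₀ T,
      0 ≤ ∫ τ in t₀..t, Real.exp (∫ s in t₀..τ, (c s - b s ^ 2 / a s)) * d τ) :
    ∃ R, ∀ ε > 0, ∃ u, IsUpperSolOn (fun t x => abelField a b c d t x - ε) (Icc t₀ T) u ∧
      -ε ≤ u t₀ ∧ ∀ t ∈ Icc t₀ T, -R ≤ u t ∧ u t ≤ 0 := by
  set P := (∫ t in Icc t₀ T, |c t|) + ∫ t in Icc t₀ T, |b t ^ 2 / a t|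
  set D := ∫ t in Icc t₀ T, |d t|
  set R := Real.exp P * (1 + Real.exp P * D)
  refine ⟨R, fun ε hε => ?_⟩
  have hδ := tendsto_integral_abs_sq_div_sub_sub (ha.aestronglyMeasurable measurableSet_Icc)
    (hb.aestronglyMeasurable measurableSet_Icc) haneg hint
  obtain ⟨θ, hκ, hθR, hθ⟩ : ∃ θ, Real.exp P * (∫ t in Icc t₀ T,
      |b t ^ 2 / (a t - θ) - b t ^ 2 / a t|) * D < min ε 1 ∧ θ * R ^ 3 < ε ∧ 0 < θ := by
    have hκ := ((hδ.const_mul (Real.exp P)).mul_const D).eventually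
      (gt_mem_nhds (show Real.exp P * 0 * D < min ε 1 by simpa using hε))
    have hθR : ∀ᶠ θ in 𝓝[>] (0 : ℝ), θ * R ^ 3 < ε :=
      (((continuous_mul_const (R ^ 3)).tendsto' 0 0 (zero_mul _)).mono_left
        nhdsWithin_le_nhds).eventually (gt_mem_nhds hε)
    exact (hκ.and (hθR.and self_mem_nhdsWithin)).exists
  obtain ⟨hu, hu_mem⟩ := isUpperSolOn_linearSol_abelField (ha.nonpos_of_ae_neg hT haneg) ha hb hc
    hd haneg hint h₀ le_rfl le_rfl hθ hκ.le (min_le_right ε 1)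
  refine ⟨_, hu.of_le fun t _ => by linarith, ?_, hu_mem⟩
  rw [linearSol_self]
  exact neg_le_neg (min_le_left ε 1)

end UpperSolution

/-- Theorem 5.4: existence of a nonpositive closed solution of the Abel equation (1.1) on
`[t₀, T]` when `a < 0` a.e., `b²/a` is integrable, the weighted integral of `d` is ≥ 0,
and (2.8) has a subsolution `η` with `η t₀ ≤ η T < 0`. -/
theorem stmt_14 (t₀ T : ℝ) (hT : t₀ < T)
    (a b c d : ℝ → ℝ)
    (ha : ContinuousOn a (Icc t₀ T)) (hb : ContinuousOn b (Icc t₀ T))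
    (hc : ContinuousOn c (Icc t₀ T)) (hd : ContinuousOn d (Icc t₀ T))
    (haneg : ∀ᵐ t ∂(volume.restrict (Icc t₀ T)), a t < 0)
    (hint : IntegrableOn (fun t => b t ^ 2 / a t) (Icc t₀ T))
    (h3 : ∀ t ∈ Icc t₀ T,
      0 ≤ ∫ τ in t₀..t, Real.exp (∫ s in t₀..τ, (c s - b s ^ 2 / a s)) * d τ)
    (η : ℝ → ℝ)
    (hη : ∀ t ∈ Icc t₀ T, ∃ v : ℝ, HasDerivWithinAt η v (Icc t₀ T) t ∧
      v + a t * η t ^ 3 + b t * η t ^ 2 + c t * η t + d t ≤ 0)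
    (hη1 : η t₀ ≤ η T) (hη2 : η T < 0) :
    ∃ y : ℝ → ℝ, IsAbelSolOn a b c d y (Icc t₀ T) ∧ y t₀ = y T ∧
      ∀ t ∈ Icc t₀ T, y t ≤ 0 := by
  obtain ⟨R₀, hupper⟩ := exists_isUpperSolOn_abelField hT ha hb hc hd haneg hint h3
  have hηlower : IsLowerSolOn (abelField a b c d) (Icc t₀ T) η := fun t ht =>
    (hη t ht).imp fun v hv => ⟨hv.1, by unfold abelField; linarith [hv.2]⟩
  obtain ⟨H, hH⟩ := isCompact_Icc.exists_bound_of_continuousOn hηlower.continuousOn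
  set R := max R₀ H
  have hR : 0 ≤ R :=
    (norm_nonneg _).trans ((hH t₀ (left_mem_Icc.2 hT.le)).trans (le_max_right _ _))
  have hηR : ∀ t ∈ Icc t₀ T, -R ≤ η t ∧ η t ≤ R := fun t ht =>
    abs_le.1 ((hH t ht).trans (le_max_right _ _))
  obtain ⟨K, C, hF⟩ := exists_lipschitzWith_clampedAbelField isCompact_Icc ha hb hc hd hR
  have hFt := continuousOn_clampedAbelField ha hb hc hd R
  obtain ⟨z, hz₀, hz⟩ := exists_forall_hasDerivWithinAt_Icc hT.le hFt (fun t ht => (hF t ht).1)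
    (fun t ht => (hF t ht).2) 0
  have hz_nonpos : ∀ t ∈ Icc t₀ T, z t ≤ 0 :=
    (isLowerSolOn_of_hasDerivWithinAt hz).nonpos_of_forall_isUpperSolOn
      (fun t ht => (hF t (Ico_subset_Icc_self ht)).1) hz₀.le fun ε hε =>
      (hupper ε hε).imp fun u ⟨hu, hu₀, huR⟩ => ⟨hu.of_le fun t ht => by
        simp only [clampedAbelField_of_mem (R := R)
          ((neg_le_neg (le_max_left R₀ H)).trans (huR t ht).1) ((huR t ht).2.trans hR), le_refl],
        hu₀, fun t ht => (huR t ht).2⟩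
  obtain ⟨y, hy, hyT, hηyz⟩ := exists_closed_solution_of_isLowerSolOn_of_isUpperSolOn hT.le hFt
    (fun t ht => (hF t ht).1) (fun t ht => (hF t ht).2)
    (hηlower.of_le fun t ht => (clampedAbelField_of_mem (hηR t ht).1 (hηR t ht).2).ge)
    (isUpperSolOn_of_hasDerivWithinAt hz) (hz₀ ▸ hη1.trans hη2.le) hη1
    (hz₀ ▸ hz_nonpos T (right_mem_Icc.2 hT.le))
  have hy_nonpos : ∀ t ∈ Icc t₀ T, y t ≤ 0 := fun t ht => (hηyz t ht).2.trans (hz_nonpos t ht)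
  refine ⟨y, fun t ht => ?_, hyT, hy_nonpos⟩
  have := hy t ht
  rwa [clampedAbelField_of_mem ((hηR t ht).1.trans (hηyz t ht).1) ((hy_nonpos t ht).trans hR)]
    at this
end

section
/- Let y₁ and y₂ be solutions of equations (2.1) and (3.10) respectively on [t₀, T] such that y₁(t₀) ≤ y₂(t₀), y₁(t₀) ≥ y₁(T), and y₂(t₀) ≤ y₂(T). Assume: (i) a(t) < 0 for almost every t ∈ [t₀, T] and b²/a is Lebesgue integrable on [t₀, T]; (ii) there exists γ₁ ∈ [y₁(t₀), y₂(t₀)] such that for all t ∈ [t₀, T], γ₁ − y₁(t₀) + ∫_{t₀}^{t} exp(∫_{t₀}^{τ} [c(s) − b(s)²/a(s)] ds)·[(a₁(τ) − a(τ))y₁(τ)³ + (b₁(τ) − b(τ))y₁(τ)² + (c₁(τ) − c(τ))y₁(τ) + d₁(τ) − d(τ)] dτ ≥ 0; (iii) there exists γ₂ ∈ [γ₁, y₂(t₀)] such that for all t ∈ [t₀, T], γ₂ − y₂(t₀) + ∫_{t₀}^{t} exp(∫_{t₀}^{τ} [c(s) − b(s)²/a(s)] ds)·[(a₂(τ) −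 a(τ))y₂(τ)³ + (b₂(τ) − b(τ))y₂(τ)² + (c₂(τ) − c(τ))y₂(τ) + d₂(τ) − d(τ)] dτ ≤ 0. Then the Abel equation (1.1) has a closed solution on [t₀, T]. -/
/-!
Since `a < 0`, the cubic term pushes large solutions outwards forwards in time, so backwards in
time the equation is dissipative. Truncate the nonlinearity at a level `R`: the truncated
equation is globally Lipschitz, so for each `η` it has a solution `z_η` on `[t₀, T]` with
`z_η T = η`, and by uniqueness `η ↦ z_η t₀` is monotone.

Completing the square gives `a w³ + b w² + c w + d ≤ a w³ / 2 + K (w + 1)` for `w ≥ 0`, where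
`K = |b²/a| + |c| + |d|` is integrable. Hence `z' ≥ -a z³ / 2 - K (z + 1)` wherever `z ≥ 0`, and
the same holds for `-z` after `b, d ↦ -b, -d`. Grönwall's inequality for the integrable kernel
`K` bounds `|z t|` by `E (|z T| + 1)` with `E` independent of `R`, and for large `η` the cubic
term forces `z_η t₀ < η` (symmetrically `z_η t₀ > η` for very negative `η`). The monotone map
`η ↦ z_η t₀` therefore has a fixed point below a threshold independent of `R`, and once `R`
exceeds `E` times that threshold, the a priori bound shows that the corresponding closed
solution never reaches the truncation.
-/

open Set MeasureTheory intervalIntegral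

lemma intervalIntegral_le_of_nonneg_of_subset {K : ℝ → ℝ} {a b c d : ℝ}
    (hK : ∀ r ∈ Icc c d, 0 ≤ K r) (hKi : IntegrableOn K (Icc c d))
    (hca : c ≤ a) (hab : a ≤ b) (hbd : b ≤ d) : ∫ r in a..b, K r ≤ ∫ r in c..d, K r :=
  integral_mono_interval hca hab hbd
    (ae_restrict_of_forall_mem measurableSet_Ioc fun r hr => hK r (Ioc_subset_Icc_self hr))
    ((intervalIntegrable_iff_integrableOn_Icc_of_le (hca.trans (hab.trans hbd))).2 hKi)

lemma integral_le_sub_of_hasDerivWithinAt_of_ae_le {z g m : ℝ → ℝ} {s t : ℝ} (hst : s ≤ t)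
    (hz : ∀ r ∈ Icc s t, HasDerivWithinAt z (g r) (Icc s t) r)
    (hg : IntervalIntegrable g volume s t) (hm : IntervalIntegrable m volume s t)
    (hmg : ∀ᵐ r ∂volume.restrict (Icc s t), m r ≤ g r) :
    ∫ r in s..t, m r ≤ z t - z s := by
  rw [← integral_eq_sub_of_hasDeriv_right_of_le hst (fun r hr => (hz r hr).continuousWithinAt)
    (fun r hr => ((hz r (Ioo_subset_Icc_self hr)).hasDerivAt
      (Icc_mem_nhds hr.1 hr.2)).hasDerivWithinAt) hg]
  exact integral_mono_ae_restrict hst hm hg hmg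

lemma intervalIntegral_pos_of_ae_pos {f : ℝ → ℝ} {u v : ℝ} (huv : u < v)
    (hf : IntegrableOn f (Icc u v)) (hpos : ∀ᵐ t ∂volume.restrict (Icc u v), 0 < f t) :
    0 < ∫ t in u..v, f t := by
  rw [intervalIntegral.integral_of_le huv.le, ← integral_Icc_eq_integral_Ioc,
    integral_pos_iff_support_of_nonneg_ae (hpos.mono fun t ht => ht.le) hf]
  have hnull : volume.restrict (Icc u v) (Function.support f)ᶜ = 0 :=
    measure_mono_null (fun t ht => by simp_all) (ae_iff.1 hpos)
  calc 0 < volume.restrict (Icc u v) univ := by simp [huv]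
    _ ≤ _ := measure_univ_le_add_compl (Function.support f)
    _ = _ := by rw [hnull, add_zero]

lemma exists_intervalIntegral_eq {K : ℝ → ℝ} {u v c : ℝ} (huv : u ≤ v)
    (hKi : IntegrableOn K (Icc u v)) (hc : c ∈ Icc 0 (∫ r in u..v, K r)) :
    ∃ τ ∈ Icc u v, ∫ r in u..τ, K r = c := by
  have hprim := intervalIntegral.continuousOn_primitive_interval (μ := volume)
    (by rwa [uIcc_of_le huv] : IntegrableOn K (uIcc u v))
  rw [uIcc_of_le huv] at hprim
  exact intermediate_value_Icc huv hprim (by rwa [intervalIntegral.integral_same])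

lemma le_two_mul_of_le_add_integral {K w : ℝ → ℝ} {u v : ℝ} (huv : u ≤ v)
    (hK : ∀ r ∈ Icc u v, 0 ≤ K r) (hKi : IntegrableOn K (Icc u v))
    (hw : ContinuousOn w (Icc u v)) (hw0 : ∀ r ∈ Icc u v, 0 ≤ w r)
    (hle : ∀ s ∈ Icc u v, w s ≤ w v + ∫ r in s..v, K r * w r)
    (hmass : ∫ r in u..v, K r ≤ 1 / 2) : w u ≤ 2 * w v := by
  obtain ⟨m, hm, hmax⟩ := isCompact_Icc.exists_isMaxOn (nonempty_Icc.2 huv) hw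
  have hKmv : IntervalIntegrable K volume m v :=
    (intervalIntegrable_iff_integrableOn_Icc_of_le hm.2).2 (hKi.mono_set (Icc_subset_Icc_left hm.1))
  have hint : ∫ r in m..v, K r * w r ≤ (∫ r in m..v, K r) * w m := by
    rw [← intervalIntegral.integral_mul_const]
    refine intervalIntegral.integral_mono_on hm.2
      (hKmv.mul_continuousOn (hw.mono (by rw [uIcc_of_le hm.2]; exact Icc_subset_Icc_left hm.1)))
      (hKmv.mul_const _) fun r hr => ?_
    have hr' : r ∈ Icc u v := ⟨hm.1.trans hr.1, hr.2⟩
    exact mul_le_mul_of_nonneg_left (hmax hr') (hK r hr')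
  have hmass' : ∫ r in m..v, K r ≤ 1 / 2 :=
    (intervalIntegral_le_of_nonneg_of_subset hK hKi hm.1 hm.2 le_rfl).trans hmass
  have hwm : w u ≤ w m := hmax (left_mem_Icc.2 huv)
  nlinarith [hle m hm, hw0 m hm]

/-- Grönwall's inequality for a merely integrable kernel: split `[u, v]` into pieces of `K`-mass
at most `1/2`. -/
lemma le_two_pow_mul_of_le_add_integral {K w : ℝ → ℝ} {u v : ℝ} (n : ℕ) (huv : u ≤ v)
    (hK : ∀ r ∈ Icc u v, 0 ≤ K r) (hKi : IntegrableOn K (Icc u v))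
    (hw : ContinuousOn w (Icc u v)) (hw0 : ∀ r ∈ Icc u v, 0 ≤ w r)
    (hle : ∀ s t, u ≤ s → s ≤ t → t ≤ v → w s ≤ w t + ∫ r in s..t, K r * w r)
    (hmass : ∫ r in u..v, K r ≤ n / 2) : w u ≤ 2 ^ (n + 1) * w v := by
  induction n generalizing u with
  | zero =>
    calc w u ≤ 2 * w v :=
          le_two_mul_of_le_add_integral huv hK hKi hw hw0 (fun s hs => hle s v hs.1 hs.2 le_rfl)
            (hmass.trans (by norm_num))
      _ = 2 ^ (0 + 1) * w v := by norm_num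
  | succ n ih =>
    have hwv : 0 ≤ w v := hw0 v (right_mem_Icc.2 huv)
    by_cases hsmall : ∫ r in u..v, K r ≤ 1 / 2
    · calc w u ≤ 2 * w v :=
            le_two_mul_of_le_add_integral huv hK hKi hw hw0
              (fun s hs => hle s v hs.1 hs.2 le_rfl) hsmall
        _ ≤ 2 ^ (n + 1 + 1) * w v := by
            gcongr
            exact le_self_pow₀ one_le_two (Nat.succ_ne_zero _)
    push Not at hsmall
    obtain ⟨τ, hτ, hτK⟩ := exists_intervalIntegral_eq huv hKi ⟨by norm_num, hsmall.le⟩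
    have hsplit := intervalIntegral.integral_add_adjacent_intervals
      ((intervalIntegrable_iff_integrableOn_Icc_of_le hτ.1).2
        (hKi.mono_set (Icc_subset_Icc_right hτ.2)))
      ((intervalIntegrable_iff_integrableOn_Icc_of_le hτ.2).2
        (hKi.mono_set (Icc_subset_Icc_left hτ.1)))
    have hleft : w u ≤ 2 * w τ :=
      le_two_mul_of_le_add_integral hτ.1 (fun r hr => hK r ⟨hr.1, hr.2.trans hτ.2⟩)
        (hKi.mono_set (Icc_subset_Icc_right hτ.2)) (hw.mono (Icc_subset_Icc_right hτ.2))
        (fun r hr => hw0 r ⟨hr.1, hr.2.trans hτ.2⟩)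
        (fun s hs => hle s τ hs.1 hs.2 hτ.2) hτK.le
    have hright : w τ ≤ 2 ^ (n + 1) * w v := by
      refine ih hτ.2 (fun r hr => hK r ⟨hτ.1.trans hr.1, hr.2⟩)
        (hKi.mono_set (Icc_subset_Icc_left hτ.1)) (hw.mono (Icc_subset_Icc_left hτ.1))
        (fun r hr => hw0 r ⟨hτ.1.trans hr.1, hr.2⟩)
        (fun s t hs hst ht => hle s t (hτ.1.trans hs) hst ht) ?_
      push_cast at hmass
      linarith
    calc w u ≤ 2 * (2 ^ (n + 1) * w v) := by linarith
      _ = 2 ^ (n + 1 + 1) * w v := by ring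

lemma exists_first_eq_of_continuousOn {z : ℝ → ℝ} {u τ p : ℝ} (huτ : u ≤ τ)
    (hz : ContinuousOn z (Icc u τ)) (hzu : p < z u) (hzτ : z τ ≤ p) :
    ∃ σ ∈ Icc u τ, z σ = p ∧ ∀ r ∈ Icc u σ, p ≤ z r := by
  set S := Icc u τ ∩ z ⁻¹' {p}
  obtain ⟨x, hx, hzx⟩ := intermediate_value_Icc' huτ hz ⟨hzτ, hzu.le⟩
  have hbdd : BddBelow S := ⟨u, fun y hy => hy.1.1⟩
  have hσ : sInf S ∈ S :=
    (hz.preimage_isClosed_of_isClosed isClosed_Icc isClosed_singleton).csInf_mem ⟨x, hx, hzx⟩ hbdd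
  refine ⟨sInf S, hσ.1, hσ.2, fun r hr => ?_⟩
  by_contra! hlt
  obtain ⟨y, hy, hzy⟩ := intermediate_value_Icc' hr.1
    (hz.mono (Icc_subset_Icc_right (hr.2.trans hσ.1.2))) ⟨hlt.le, hzu.le⟩
  have hyσ : sInf S ≤ y := csInf_le hbdd ⟨⟨hy.1, hy.2.trans (hr.2.trans hσ.1.2)⟩, hzy⟩
  have hrσ : r = sInf S := le_antisymm hr.2 (hyσ.trans hy.2)
  have : z r = p := hrσ ▸ hσ.2
  linarith

lemma exists_forall_lt_mul_pow_three {γ : ℝ} (hγ : 0 < γ) (β : ℝ) :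
    ∃ r, ∀ x, r < x → β * (x + 1) < γ * x ^ 3 := by
  refine ⟨2 * |β| / γ + 1, fun x hx => ?_⟩
  have hβ : 0 ≤ 2 * |β| / γ := by positivity
  have hx1 : 1 ≤ x := by linarith
  have hγx : 2 * |β| < γ * x := by
    rw [← div_lt_iff₀' hγ]
    linarith
  calc β * (x + 1) ≤ 2 * |β| * x := by nlinarith [le_abs_self β, abs_nonneg β]
    _ < γ * x * x := by nlinarith
    _ ≤ γ * x ^ 3 := by
        have hγx0 : 0 ≤ γ * x * x := by positivity
        nlinarith [mul_nonneg hγx0 (sub_nonneg.2 hx1)]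

lemma exists_mem_Icc_fixedPoint_of_monotone {P : ℝ → ℝ} (hP : Monotone P) {r N : ℝ}
    (hr : 0 ≤ r) (hrN : r < N) (hup : ∀ x ∈ Ioc r N, P x < x)
    (hdown : ∀ x ∈ Ico (-N) (-r), x < P x) : ∃ x ∈ Icc (-r) r, P x = x := by
  set S := {x | x ∈ Icc (-N) N ∧ x ≤ P x}
  have hPN : -N < P (-N) := hdown (-N) ⟨le_rfl, by linarith⟩
  have hN : -N ∈ S := ⟨⟨le_rfl, by linarith⟩, hPN.le⟩
  have hbdd : BddAbove S := ⟨N, fun x hx => hx.1.2⟩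
  set x := sSup S
  have hx : x ∈ Icc (-N) N := ⟨le_csSup hbdd hN, csSup_le ⟨_, hN⟩ fun y hy => hy.1.2⟩
  have hxP : x ≤ P x := csSup_le ⟨_, hN⟩ fun y hy => hy.2.trans (hP (le_csSup hbdd hy))
  have hPx : P x ∈ S :=
    ⟨⟨hPN.le.trans (hP hx.1), (hP hx.2).trans (hup N ⟨hrN, le_rfl⟩).le⟩, hP hxP⟩
  have hfix : P x = x := le_antisymm (le_csSup hbdd hPx) hxP
  refine ⟨x, ⟨?_, ?_⟩, hfix⟩
  · by_contra! h
    linarith [hdown x ⟨hx.1, h⟩]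
  · by_contra! h
    linarith [hup x ⟨h, hx.2⟩]

/-- Integrated form of `z' ≥ α p³ - K (z + 1)` on the stretches where `z ≥ p`, for every level
`0 ≤ p ≤ R`. -/
def IsCubicSupersolOn (t₀ T R : ℝ) (α K z : ℝ → ℝ) : Prop :=
  ∀ p ∈ Icc 0 R, ∀ s t, t₀ ≤ s → s ≤ t → t ≤ T → (∀ r ∈ Icc s t, p ≤ z r) →
    z s + (∫ r in s..t, α r) * p ^ 3 ≤ z t + ∫ r in s..t, K r * (z r + 1)

namespace IsCubicSupersolOn

variable {t₀ T R : ℝ} {α K z : ℝ → ℝ} {n : ℕ}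

lemma add_one_le (hsup : IsCubicSupersolOn t₀ T R α K z) (hR : 0 ≤ R)
    (hK : ∀ r ∈ Icc t₀ T, 0 ≤ K r) (hKi : IntegrableOn K (Icc t₀ T))
    (hz : ContinuousOn z (Icc t₀ T)) (hn : ∫ r in t₀..T, K r ≤ n / 2)
    {u v : ℝ} (hu : t₀ ≤ u) (huv : u ≤ v) (hv : v ≤ T) (hz0 : ∀ r ∈ Icc u v, 0 ≤ z r) :
    z u + 1 ≤ 2 ^ (n + 1) * (z v + 1) := by
  have hsub : Icc u v ⊆ Icc t₀ T := Icc_subset_Icc hu hv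
  refine le_two_pow_mul_of_le_add_integral (w := fun r => z r + 1) n huv
    (fun r hr => hK r (hsub hr)) (hKi.mono_set hsub) ((hz.mono hsub).add continuousOn_const)
    (fun r hr => by linarith [hz0 r hr]) (fun s t hs hst ht => ?_)
    ((intervalIntegral_le_of_nonneg_of_subset hK hKi hu huv hv).trans hn)
  have := hsup 0 ⟨le_rfl, hR⟩ s t (hu.trans hs) hst (ht.trans hv)
    fun r hr => hz0 r ⟨hs.trans hr.1, hr.2.trans ht⟩
  rw [zero_pow three_ne_zero, mul_zero, add_zero] at this
  linarith

lemma le_two_pow_mul (hsup : IsCubicSupersolOn t₀ T R α K z) (hR : 0 ≤ R)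
    (hK : ∀ r ∈ Icc t₀ T, 0 ≤ K r) (hKi : IntegrableOn K (Icc t₀ T))
    (hz : ContinuousOn z (Icc t₀ T)) (hn : ∫ r in t₀..T, K r ≤ n / 2) {t : ℝ}
    (ht : t ∈ Icc t₀ T) : z t ≤ 2 ^ (n + 1) * (max (z T) 0 + 1) := by
  have hE : (1 : ℝ) ≤ 2 ^ (n + 1) := one_le_pow₀ one_le_two
  by_cases hpos : ∀ r ∈ Icc t T, 0 ≤ z r
  · have := hsup.add_one_le hR hK hKi hz hn ht.1 ht.2 le_rfl hpos
    have : z T + 1 ≤ max (z T) 0 + 1 := by linarith [le_max_left (z T) 0]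
    nlinarith
  push Not at hpos
  obtain ⟨τ, hτ, hzτ⟩ := hpos
  have hmax : 0 ≤ max (z T) 0 := le_max_right _ _
  rcases le_or_gt (z t) 0 with hzt | hzt
  · nlinarith
  obtain ⟨σ, hσ, hzσ, habove⟩ := exists_first_eq_of_continuousOn hτ.1
    (hz.mono (Icc_subset_Icc ht.1 hτ.2)) hzt hzτ.le
  have := hsup.add_one_le hR hK hKi hz hn ht.1 hσ.1 (hσ.2.trans hτ.2) habove
  rw [hzσ] at this
  nlinarith

lemma abs_le_two_pow_mul (hsup : IsCubicSupersolOn t₀ T R α K z)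
    (hsup' : IsCubicSupersolOn t₀ T R α K (-z)) (hR : 0 ≤ R)
    (hK : ∀ r ∈ Icc t₀ T, 0 ≤ K r) (hKi : IntegrableOn K (Icc t₀ T))
    (hz : ContinuousOn z (Icc t₀ T)) (hn : ∫ r in t₀..T, K r ≤ n / 2) {t : ℝ}
    (ht : t ∈ Icc t₀ T) : |z t| ≤ 2 ^ (n + 1) * (|z T| + 1) := by
  have hup := hsup.le_two_pow_mul hR hK hKi hz hn ht
  have hlow := hsup'.le_two_pow_mul hR hK hKi hz.neg hn ht
  simp only [Pi.neg_apply] at hlow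
  have h1 : max (z T) 0 ≤ |z T| := max_le (le_abs_self _) (abs_nonneg _)
  have h2 : max (-z T) 0 ≤ |z T| := max_le (neg_le_abs _) (abs_nonneg _)
  have hE : (0 : ℝ) ≤ 2 ^ (n + 1) := by positivity
  rw [abs_le]
  constructor <;> nlinarith

/-- Either `z` stays above `p` on `[t₀, T]` and the cubic term dominates, or Grönwall bounds
`z t₀` by the value `p` at the first time `z` hits `p`. -/
lemma apply_left_lt (hsup : IsCubicSupersolOn t₀ T R α K z) (hT : t₀ ≤ T)
    (hK : ∀ r ∈ Icc t₀ T, 0 ≤ K r) (hKi : IntegrableOn K (Icc t₀ T))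
    (hz : ContinuousOn z (Icc t₀ T)) (hn : ∫ r in t₀..T, K r ≤ n / 2) {p : ℝ}
    (hp : p ∈ Icc 0 R) (hpT : 2 ^ (n + 1) * (p + 1) ≤ z T)
    (hcub : (∫ r in t₀..T, K r) * (2 ^ (n + 1) * (z T + 1)) < (∫ r in t₀..T, α r) * p ^ 3) :
    z t₀ < z T := by
  have hR : 0 ≤ R := hp.1.trans hp.2
  have hE : (1 : ℝ) ≤ 2 ^ (n + 1) := one_le_pow₀ one_le_two
  by_cases habove : ∀ r ∈ Icc t₀ T, p ≤ z r
  · have hbound : ∀ r ∈ Icc t₀ T, K r * (z r + 1) ≤ K r * (2 ^ (n + 1) * (z T + 1)) :=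
      fun r hr => mul_le_mul_of_nonneg_left (hsup.add_one_le hR hK hKi hz hn hr.1 hr.2 le_rfl
        fun q hq => hp.1.trans (habove q ⟨hr.1.trans hq.1, hq.2⟩)) (hK r hr)
    have hKii : IntervalIntegrable K volume t₀ T :=
      (intervalIntegrable_iff_integrableOn_Icc_of_le hT).2 hKi
    have hint : ∫ r in t₀..T, K r * (z r + 1)
        ≤ (∫ r in t₀..T, K r) * (2 ^ (n + 1) * (z T + 1)) := by
      rw [← intervalIntegral.integral_mul_const]
      exact intervalIntegral.integral_mono_on hT
        (hKii.mul_continuousOn (by rw [uIcc_of_le hT]; exact hz.add continuousOn_const))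
        (hKii.mul_const _) hbound
    linarith [hsup p hp t₀ T le_rfl hT le_rfl habove]
  push Not at habove
  obtain ⟨τ, hτ, hzτ⟩ := habove
  rcases le_or_gt (z t₀) p with hzt | hzt
  · nlinarith [hp.1]
  obtain ⟨σ, hσ, hzσ, habove⟩ := exists_first_eq_of_continuousOn hτ.1
    (hz.mono (Icc_subset_Icc_right hτ.2)) hzt hzτ.le
  have := hsup.add_one_le hR hK hKi hz hn le_rfl hσ.1 (hσ.2.trans hτ.2)
    fun r hr => hp.1.trans (habove r hr)
  rw [hzσ] at this
  linarith

end IsCubicSupersolOn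

lemma exists_crossing_threshold {t₀ T : ℝ} {α K : ℝ → ℝ} {n : ℕ} (hT : t₀ ≤ T)
    (hK : ∀ r ∈ Icc t₀ T, 0 ≤ K r) (hKi : IntegrableOn K (Icc t₀ T))
    (hn : ∫ r in t₀..T, K r ≤ n / 2) (hα : 0 < ∫ r in t₀..T, α r) :
    ∃ r, 0 ≤ r ∧ ∀ R z, ContinuousOn z (Icc t₀ T) → IsCubicSupersolOn t₀ T R α K z →
      r < z T → z T ≤ 2 * 2 ^ (n + 1) * R → z t₀ < z T := by
  set E : ℝ := 2 ^ (n + 1)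
  have hE : 1 ≤ E := one_le_pow₀ one_le_two
  obtain ⟨r₀, hr₀⟩ := exists_forall_lt_mul_pow_three
    (γ := (∫ r in t₀..T, α r) / (8 * E ^ 3)) (by positivity) ((∫ r in t₀..T, K r) * E)
  refine ⟨max r₀ (2 * E), le_max_of_le_right (by positivity), fun R z hz hsup hzT hzR => ?_⟩
  have hr₀' : r₀ < z T := (le_max_left _ _).trans_lt hzT
  have hE' : 2 * E < z T := (le_max_right _ _).trans_lt hzT
  -- the test level `p = z T / (2E)` stays below `R` and makes the cubic term dominate
  refine hsup.apply_left_lt hT hK hKi hz hn (p := z T / (2 * E))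
    ⟨div_nonneg (by linarith) (by positivity), (div_le_iff₀ (by positivity)).2 (by linarith)⟩ ?_ ?_
  · show E * (z T / (2 * E) + 1) ≤ z T
    have : E * (z T / (2 * E) + 1) = z T / 2 + E := by field_simp
    linarith
  · calc (∫ r in t₀..T, K r) * (E * (z T + 1)) = (∫ r in t₀..T, K r) * E * (z T + 1) := by ring
      _ < (∫ r in t₀..T, α r) / (8 * E ^ 3) * z T ^ 3 := hr₀ (z T) hr₀'
      _ = (∫ r in t₀..T, α r) * (z T / (2 * E)) ^ 3 := by field_simp; ring

namespace Abel

noncomputable def symmClamp (R x : ℝ) : ℝ := max (-R) (min R x)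

lemma abs_symmClamp_le {R : ℝ} (hR : 0 ≤ R) (x : ℝ) : |symmClamp R x| ≤ R :=
  abs_le.2 ⟨le_max_left _ _, max_le (by linarith) (min_le_left _ _)⟩

lemma symmClamp_of_abs_le {R x : ℝ} (h : |x| ≤ R) : symmClamp R x = x := by
  rw [abs_le] at h
  rw [symmClamp, min_eq_right h.2, max_eq_right h.1]

lemma symmClamp_neg {R : ℝ} (hR : 0 ≤ R) (x : ℝ) : symmClamp R (-x) = -symmClamp R x := by
  simp only [symmClamp]
  rcases le_total x (-R) with h | h <;> rcases le_total x R with h' | h' <;>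
    simp only [min_def, max_def] <;> split_ifs <;> linarith

lemma lipschitzWith_symmClamp (R : ℝ) : LipschitzWith 1 (symmClamp R) :=
  (LipschitzWith.id.const_min R).const_max (-R)

lemma monotone_symmClamp (R : ℝ) : Monotone (symmClamp R) :=
  fun _ _ h => max_le_max le_rfl (min_le_min le_rfl h)

lemma le_symmClamp {R p x : ℝ} (hp : p ∈ Icc 0 R) (hpx : p ≤ x) : p ≤ symmClamp R x := by
  calc p = symmClamp R p := (symmClamp_of_abs_le (abs_le.2 ⟨by linarith [hp.1, hp.2], hp.2⟩)).symm
    _ ≤ symmClamp R x := monotone_symmClamp R hpx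

lemma symmClamp_le_self {R x : ℝ} (hR : 0 ≤ R) (hx : 0 ≤ x) : symmClamp R x ≤ x :=
  max_le (by linarith) (min_le_right _ _)

noncomputable def abelField (a b c d : ℝ → ℝ) (t x : ℝ) : ℝ :=
  -(a t * x ^ 3 + b t * x ^ 2 + c t * x + d t)

noncomputable def truncAbelField (R : ℝ) (a b c d : ℝ → ℝ) (t x : ℝ) : ℝ :=
  abelField a b c d t (symmClamp R x)

/-- The `K` of `a w³ + b w² + c w + d ≤ a w³ / 2 + K (w + 1)`, valid for `a < 0` and `w ≥ 0`. -/
noncomputable def abelKernel (a b c d : ℝ → ℝ) (t : ℝ) : ℝ :=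
  |b t ^ 2 / a t| + |c t| + |d t|

lemma abelField_neg (a b c d : ℝ → ℝ) (t x : ℝ) :
    abelField a (-b) c (-d) t (-x) = -abelField a b c d t x := by
  simp only [abelField, Pi.neg_apply]
  ring

lemma truncAbelField_neg {R : ℝ} (hR : 0 ≤ R) (a b c d : ℝ → ℝ) (t x : ℝ) :
    truncAbelField R a (-b) c (-d) t (-x) = -truncAbelField R a b c d t x := by
  rw [truncAbelField, symmClamp_neg hR, abelField_neg, truncAbelField]

lemma abelKernel_neg (a b c d : ℝ → ℝ) : abelKernel a (-b) c (-d) = abelKernel a b c d := by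
  ext t
  simp [abelKernel]

lemma abs_abelField_sub_le {a b c d : ℝ → ℝ} {t R M u v : ℝ} (ha : |a t| ≤ M) (hb : |b t| ≤ M)
    (hc : |c t| ≤ M) (hu : |u| ≤ R) (hv : |v| ≤ R) :
    |abelField a b c d t u - abelField a b c d t v| ≤ M * (3 * R ^ 2 + 2 * R + 1) * |u - v| := by
  have hfactor : abelField a b c d t u - abelField a b c d t v
      = -((u - v) * (a t * (u ^ 2 + u * v + v ^ 2) + b t * (u + v) + c t)) := by
    simp only [abelField]
    ring
  have hquad : |u ^ 2 + u * v + v ^ 2| ≤ 3 * R ^ 2 := by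
    rw [abs_of_nonneg (by nlinarith [sq_nonneg (u + v), sq_nonneg u, sq_nonneg v])]
    have hu2 : u ^ 2 ≤ R ^ 2 := sq_le_sq' (abs_le.1 hu).1 (abs_le.1 hu).2
    have hv2 : v ^ 2 ≤ R ^ 2 := sq_le_sq' (abs_le.1 hv).1 (abs_le.1 hv).2
    nlinarith [sq_nonneg (u - v)]
  have hlin : |u + v| ≤ 2 * R := (abs_add_le u v).trans (by linarith)
  rw [hfactor, abs_neg, abs_mul, mul_comm]
  gcongr
  calc |a t * (u ^ 2 + u * v + v ^ 2) + b t * (u + v) + c t|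
      ≤ |a t| * |u ^ 2 + u * v + v ^ 2| + |b t| * |u + v| + |c t| := by
        rw [← abs_mul, ← abs_mul]
        exact (abs_add_le _ _).trans (add_le_add_left (abs_add_le _ _) _)
    _ ≤ M * (3 * R ^ 2) + M * (2 * R) + M := by
        have hM : 0 ≤ M := (abs_nonneg _).trans ha
        gcongr
    _ = M * (3 * R ^ 2 + 2 * R + 1) := by ring

lemma exists_lipschitzWith_truncAbelField {t₀ T R : ℝ} (hR : 0 ≤ R) {a b c d : ℝ → ℝ}
    (ha : ContinuousOn a (Icc t₀ T)) (hb : ContinuousOn b (Icc t₀ T))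
    (hc : ContinuousOn c (Icc t₀ T)) :
    ∃ L, ∀ t ∈ Icc t₀ T, LipschitzWith L (truncAbelField R a b c d t) := by
  obtain ⟨Ma, hMa⟩ := isCompact_Icc.exists_bound_of_continuousOn ha
  obtain ⟨Mb, hMb⟩ := isCompact_Icc.exists_bound_of_continuousOn hb
  obtain ⟨Mc, hMc⟩ := isCompact_Icc.exists_bound_of_continuousOn hc
  set M := max Ma (max Mb Mc)
  refine ⟨(M * (3 * R ^ 2 + 2 * R + 1)).toNNReal, fun t ht =>
    LipschitzWith.of_dist_le_mul fun x y => ?_⟩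
  have ha' : |a t| ≤ M := (hMa t ht).trans (le_max_left _ _)
  have hb' : |b t| ≤ M := (hMb t ht).trans ((le_max_left _ _).trans (le_max_right _ _))
  have hc' : |c t| ≤ M := (hMc t ht).trans ((le_max_right _ _).trans (le_max_right _ _))
  have hclamp : |symmClamp R x - symmClamp R y| ≤ |x - y| := by
    simpa [Real.dist_eq] using (lipschitzWith_symmClamp R).dist_le_mul x y
  rw [Real.dist_eq, Real.dist_eq, Real.coe_toNNReal _ (by positivity [(abs_nonneg _).trans ha'])]
  calc _ ≤ M * (3 * R ^ 2 + 2 * R + 1) * |symmClamp R x - symmClamp R y| :=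
        abs_abelField_sub_le ha' hb' hc' (abs_symmClamp_le hR x) (abs_symmClamp_le hR y)
    _ ≤ M * (3 * R ^ 2 + 2 * R + 1) * |x - y| := by
        have hM : 0 ≤ M := (abs_nonneg _).trans ha'
        gcongr

lemma exists_abs_truncAbelField_le {t₀ T R : ℝ} (hR : 0 ≤ R) {a b c d : ℝ → ℝ}
    (ha : ContinuousOn a (Icc t₀ T)) (hb : ContinuousOn b (Icc t₀ T))
    (hc : ContinuousOn c (Icc t₀ T)) (hd : ContinuousOn d (Icc t₀ T)) :
    ∃ M, ∀ t ∈ Icc t₀ T, ∀ x, |truncAbelField R a b c d t x| ≤ M := by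
  have hfst {f : ℝ → ℝ} (hf : ContinuousOn f (Icc t₀ T)) :
      ContinuousOn (fun p : ℝ × ℝ => f p.1) (Icc t₀ T ×ˢ Icc (-R) R) :=
    hf.comp continuousOn_fst fun _ hp => hp.1
  have hcont : ContinuousOn (fun p : ℝ × ℝ => abelField a b c d p.1 p.2)
      (Icc t₀ T ×ˢ Icc (-R) R) := by
    have hx : ContinuousOn (fun p : ℝ × ℝ => p.2) (Icc t₀ T ×ˢ Icc (-R) R) := continuousOn_snd
    exact ((((hfst ha).mul (hx.pow 3)).add ((hfst hb).mul (hx.pow 2))).add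
      ((hfst hc).mul hx)).add (hfst hd) |>.neg
  obtain ⟨M, hM⟩ := (isCompact_Icc.prod isCompact_Icc).exists_bound_of_continuousOn hcont
  exact ⟨M, fun t ht x => hM (t, symmClamp R x) ⟨ht, abs_le.1 (abs_symmClamp_le hR x)⟩⟩

lemma continuousOn_truncAbelField {R : ℝ} {a b c d z : ℝ → ℝ} {s : Set ℝ}
    (ha : ContinuousOn a s) (hb : ContinuousOn b s) (hc : ContinuousOn c s)
    (hd : ContinuousOn d s) (hz : ContinuousOn z s) :
    ContinuousOn (fun t => truncAbelField R a b c d t (z t)) s := by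
  have := (lipschitzWith_symmClamp R).continuous.comp_continuousOn hz
  simp only [truncAbelField, abelField]
  fun_prop

lemma abelKernel_nonneg (a b c d : ℝ → ℝ) (t : ℝ) : 0 ≤ abelKernel a b c d t := by
  unfold abelKernel
  positivity

lemma cubic_sub_abelKernel_le_abelField {a b c d : ℝ → ℝ} {t w : ℝ} (ha : a t < 0)
    (hw : 0 ≤ w) : -a t / 2 * w ^ 3 - abelKernel a b c d t * (w + 1) ≤ abelField a b c d t w := by
  have hsq : a t / 2 * w ^ 3 + b t * w ^ 2 ≤ |b t ^ 2 / a t| * w := by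
    rw [abs_of_nonpos (div_nonpos_of_nonneg_of_nonpos (sq_nonneg _) ha.le)]
    -- completing the square in `w`
    have h : a t * (a t / 2 * w ^ 3 + b t * w ^ 2 + b t ^ 2 / a t * w)
        = w * ((a t * w + b t) ^ 2 + b t ^ 2) / 2 := by
      field_simp [ha.ne]
      ring
    nlinarith [mul_nonneg hw (add_nonneg (sq_nonneg (a t * w + b t)) (sq_nonneg (b t)))]
  have hc : c t * w ≤ |c t| * (w + 1) := by
    nlinarith [le_abs_self (c t), abs_nonneg (c t)]
  have hd : d t ≤ |d t| * (w + 1) := by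
    nlinarith [le_abs_self (d t), abs_nonneg (d t)]
  have hq : |b t ^ 2 / a t| * w ≤ |b t ^ 2 / a t| * (w + 1) := by
    nlinarith [abs_nonneg (b t ^ 2 / a t)]
  simp only [abelField, abelKernel]
  linarith

def IsTruncAbelSolOn (R : ℝ) (a b c d z : ℝ → ℝ) (S : Set ℝ) : Prop :=
  ∀ t ∈ S, HasDerivWithinAt z (truncAbelField R a b c d t (z t)) S t

namespace IsTruncAbelSolOn

variable {R : ℝ} {a b c d z : ℝ → ℝ} {S : Set ℝ}

lemma continuousOn (hz : IsTruncAbelSolOn R a b c d z S) : ContinuousOn z S :=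
  fun t ht => (hz t ht).continuousWithinAt

lemma neg (hR : 0 ≤ R) (hz : IsTruncAbelSolOn R a b c d z S) :
    IsTruncAbelSolOn R a (-b) c (-d) (-z) S := fun t ht => by
  rw [Pi.neg_apply, truncAbelField_neg hR]
  exact (hz t ht).neg

lemma isAbelSolOn (hz : IsTruncAbelSolOn R a b c d z S) (hzR : ∀ t ∈ S, |z t| ≤ R) :
    IsAbelSolOn a b c d z S := fun t ht => by
  have := hz t ht
  rw [truncAbelField, symmClamp_of_abs_le (hzR t ht)] at this
  exact this

end IsTruncAbelSolOn

lemma exists_isTruncAbelSolOn {t₀ T R : ℝ} (hT : t₀ ≤ T) (hR : 0 ≤ R) {a b c d : ℝ → ℝ}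
    (ha : ContinuousOn a (Icc t₀ T)) (hb : ContinuousOn b (Icc t₀ T))
    (hc : ContinuousOn c (Icc t₀ T)) (hd : ContinuousOn d (Icc t₀ T)) (η : ℝ) :
    ∃ z, z T = η ∧ IsTruncAbelSolOn R a b c d z (Icc t₀ T) := by
  obtain ⟨L, hL⟩ := exists_lipschitzWith_truncAbelField (d := d) hR ha hb hc
  obtain ⟨M, hM⟩ := exists_abs_truncAbelField_le hR ha hb hc hd
  have hM0 : 0 ≤ M := (abs_nonneg _).trans (hM T ⟨hT, le_rfl⟩ 0)
  have hpl : IsPicardLindelof (truncAbelField R a b c d) (tmin := t₀) (tmax := T)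
      ⟨T, hT, le_rfl⟩ η ⟨M * (T - t₀), mul_nonneg hM0 (sub_nonneg.2 hT)⟩ 0 ⟨M, hM0⟩ L :=
    { lipschitzOnWith := fun t ht => (hL t ht).lipschitzOnWith
      continuousOn := fun _ _ => continuousOn_truncAbelField ha hb hc hd continuousOn_const
      norm_le := fun t ht x _ => hM t ht x
      mul_max_le := by
        change M * max (T - T) (T - t₀) ≤ M * (T - t₀) - 0
        rw [sub_self, max_eq_right (sub_nonneg.2 hT), sub_zero] }
  exact hpl.exists_eq_forall_mem_Icc_hasDerivWithinAt₀

lemma IsTruncAbelSolOn.apply_left_le {t₀ T R : ℝ} (hT : t₀ ≤ T) (hR : 0 ≤ R)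
    {a b c d z₁ z₂ : ℝ → ℝ} (ha : ContinuousOn a (Icc t₀ T)) (hb : ContinuousOn b (Icc t₀ T))
    (hc : ContinuousOn c (Icc t₀ T)) (h₁ : IsTruncAbelSolOn R a b c d z₁ (Icc t₀ T))
    (h₂ : IsTruncAbelSolOn R a b c d z₂ (Icc t₀ T)) (hle : z₁ T ≤ z₂ T) : z₁ t₀ ≤ z₂ t₀ := by
  by_contra! hlt
  obtain ⟨τ, hτ, hτ₀⟩ := intermediate_value_Icc' hT (h₁.continuousOn.sub h₂.continuousOn)
    (show (0 : ℝ) ∈ Icc (z₁ T - z₂ T) (z₁ t₀ - z₂ t₀) from ⟨by linarith, by linarith⟩)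
  obtain ⟨L, hL⟩ := exists_lipschitzWith_truncAbelField (d := d) hR ha hb hc
  have hsub : Icc t₀ τ ⊆ Icc t₀ T := Icc_subset_Icc_right hτ.2
  have hleft {z : ℝ → ℝ} (hz : IsTruncAbelSolOn R a b c d z (Icc t₀ T)) :
      ∀ t ∈ Ioc t₀ τ, HasDerivWithinAt z (truncAbelField R a b c d t (z t)) (Iic t) t :=
    fun t ht => (hz t (hsub (Ioc_subset_Icc_self ht))).mono_of_mem_nhdsWithin
      (Icc_mem_nhdsLE_of_mem ⟨ht.1, ht.2.trans hτ.2⟩)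
  have heq := ODE_solution_unique_of_mem_Icc_left (s := fun _ => univ)
    (fun t ht => (hL t (hsub (Ioc_subset_Icc_self ht))).lipschitzOnWith)
    (h₁.continuousOn.mono hsub) (hleft h₁) (fun _ _ => trivial)
    (h₂.continuousOn.mono hsub) (hleft h₂) (fun _ _ => trivial) (sub_eq_zero.1 hτ₀)
    (left_mem_Icc.2 hτ.1)
  linarith [heq]

lemma IsTruncAbelSolOn.isCubicSupersolOn {t₀ T R : ℝ} {a b c d z : ℝ → ℝ}
    (hz : IsTruncAbelSolOn R a b c d z (Icc t₀ T))
    (ha : ContinuousOn a (Icc t₀ T)) (hb : ContinuousOn b (Icc t₀ T))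
    (hc : ContinuousOn c (Icc t₀ T)) (hd : ContinuousOn d (Icc t₀ T))
    (haneg : ∀ᵐ t ∂volume.restrict (Icc t₀ T), a t < 0)
    (hK : IntegrableOn (abelKernel a b c d) (Icc t₀ T)) :
    IsCubicSupersolOn t₀ T R (fun t => -a t / 2) (abelKernel a b c d) z := by
  intro p hp s t hs hst ht hpz
  have hsub : Icc s t ⊆ Icc t₀ T := Icc_subset_Icc hs ht
  have hzc : ContinuousOn z (Icc s t) := hz.continuousOn.mono hsub
  have hα : IntervalIntegrable (fun r => -a r / 2) volume s t :=
    ((ha.mono hsub).neg.div_const 2).intervalIntegrable_of_Icc hst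
  have hKz : IntervalIntegrable (fun r => abelKernel a b c d r * (z r + 1)) volume s t :=
    ((intervalIntegrable_iff_integrableOn_Icc_of_le hst).2 (hK.mono_set hsub)).mul_continuousOn
      (by rw [uIcc_of_le hst]; exact hzc.add continuousOn_const)
  have hlower := integral_le_sub_of_hasDerivWithinAt_of_ae_le hst
    (fun r hr => (hz r (hsub hr)).mono hsub)
    ((continuousOn_truncAbelField (ha.mono hsub) (hb.mono hsub) (hc.mono hsub) (hd.mono hsub)
      hzc).intervalIntegrable_of_Icc hst) ((hα.mul_const (p ^ 3)).sub hKz) ?_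
  · rw [intervalIntegral.integral_sub (hα.mul_const _) hKz, intervalIntegral.integral_mul_const]
      at hlower
    linarith
  filter_upwards [ae_restrict_of_ae_restrict_of_subset hsub haneg,
    ae_restrict_mem measurableSet_Icc] with r har hr
  have hzr : p ≤ z r := hpz r hr
  have hpw : p ≤ symmClamp R (z r) := le_symmClamp hp hzr
  have hwz : symmClamp R (z r) ≤ z r := symmClamp_le_self (hp.1.trans hp.2) (hp.1.trans hzr)
  have hK0 := abelKernel_nonneg a b c d r
  calc -a r / 2 * p ^ 3 - abelKernel a b c d r * (z r + 1)
      ≤ -a r / 2 * symmClamp R (z r) ^ 3 - abelKernel a b c d r * (symmClamp R (z r) + 1) := by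
        have : 0 ≤ -a r / 2 := by linarith
        have := hp.1
        gcongr
    _ ≤ truncAbelField R a b c d r (z r) :=
        cubic_sub_abelKernel_le_abelField har (hp.1.trans hpw)

lemma exists_truncAbelSol_estimates {t₀ T : ℝ} (hT : t₀ < T) {a b c d : ℝ → ℝ}
    (ha : ContinuousOn a (Icc t₀ T)) (hb : ContinuousOn b (Icc t₀ T))
    (hc : ContinuousOn c (Icc t₀ T)) (hd : ContinuousOn d (Icc t₀ T))
    (haneg : ∀ᵐ t ∂volume.restrict (Icc t₀ T), a t < 0)
    (hint : IntegrableOn (fun t => b t ^ 2 / a t) (Icc t₀ T)) :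
    ∃ E r : ℝ, 1 ≤ E ∧ 0 ≤ r ∧ ∀ R z, 0 ≤ R → IsTruncAbelSolOn R a b c d z (Icc t₀ T) →
      (∀ t ∈ Icc t₀ T, |z t| ≤ E * (|z T| + 1)) ∧
      (r < z T → z T ≤ 2 * E * R → z t₀ < z T) ∧
      (-(2 * E * R) ≤ z T → z T < -r → z T < z t₀) := by
  have hK : IntegrableOn (abelKernel a b c d) (Icc t₀ T) :=
    (hint.abs.add hc.abs.integrableOn_Icc).add hd.abs.integrableOn_Icc
  have hK0 : ∀ t ∈ Icc t₀ T, 0 ≤ abelKernel a b c d t := fun t _ => abelKernel_nonneg a b c d t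
  obtain ⟨n, hn⟩ : ∃ n : ℕ, ∫ t in t₀..T, abelKernel a b c d t ≤ n / 2 := by
    obtain ⟨n, hn⟩ := exists_nat_ge (2 * ∫ t in t₀..T, abelKernel a b c d t)
    exact ⟨n, by linarith⟩
  have hα : 0 < ∫ t in t₀..T, -a t / 2 := intervalIntegral_pos_of_ae_pos hT
    (ha.neg.div_const 2).integrableOn_Icc (haneg.mono fun t ht => by linarith)
  obtain ⟨r, hr, hcross⟩ := exists_crossing_threshold hT.le hK0 hK hn hα
  refine ⟨2 ^ (n + 1), r, one_le_pow₀ one_le_two, hr, fun R z hR hz => ?_⟩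
  have hsup := hz.isCubicSupersolOn ha hb hc hd haneg hK
  have hsup' : IsCubicSupersolOn t₀ T R (fun t => -a t / 2) (abelKernel a b c d) (-z) := by
    rw [← abelKernel_neg]
    exact (hz.neg hR).isCubicSupersolOn ha hb.neg hc hd.neg haneg (by rwa [abelKernel_neg])
  refine ⟨fun t ht => hsup.abs_le_two_pow_mul hsup' hR hK0 hK hz.continuousOn hn ht,
    hcross R z hz.continuousOn hsup, fun hlow hhigh => ?_⟩
  have := hcross R (-z) hz.continuousOn.neg hsup' (by simp only [Pi.neg_apply]; linarith)
    (by simp only [Pi.neg_apply]; linarith)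
  simp only [Pi.neg_apply] at this
  linarith

end Abel

open Abel

theorem stmt_16_general (t₀ T : ℝ) (hT : t₀ < T)
    (a b c d : ℝ → ℝ)
    (ha : ContinuousOn a (Icc t₀ T)) (hb : ContinuousOn b (Icc t₀ T))
    (hc : ContinuousOn c (Icc t₀ T)) (hd : ContinuousOn d (Icc t₀ T))
    (haneg : ∀ᵐ t ∂(volume.restrict (Icc t₀ T)), a t < 0)
    (hint : IntegrableOn (fun t => b t ^ 2 / a t) (Icc t₀ T)) :
    ∃ y : ℝ → ℝ, IsAbelSolOn a b c d y (Icc t₀ T) ∧ y t₀ = y T := by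
  obtain ⟨E, r, hE, hr, hest⟩ := exists_truncAbelSol_estimates hT ha hb hc hd haneg hint
  set R := E * (r + 1)
  have hR : 0 ≤ R := by positivity
  choose z hzT hz using exists_isTruncAbelSolOn hT.le hR ha hb hc hd
  obtain ⟨η, hη, hfix⟩ := exists_mem_Icc_fixedPoint_of_monotone (P := fun η => z η t₀)
    (fun η₁ η₂ h => (hz η₁).apply_left_le hT.le hR ha hb hc (hz η₂) (by rwa [hzT, hzT]))
    hr (N := 2 * E * R) (by nlinarith)
    (fun η hη => by
      have := (hest R (z η) hR (hz η)).2.1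
      rw [hzT] at this
      exact this hη.1 hη.2)
    (fun η hη => by
      have := (hest R (z η) hR (hz η)).2.2
      rw [hzT] at this
      exact this hη.1 hη.2)
  refine ⟨z η, (hz η).isAbelSolOn fun t ht => ?_, hfix.trans (hzT η).symm⟩
  calc |z η t| ≤ E * (|z η T| + 1) := (hest R (z η) hR (hz η)).1 t ht
    _ ≤ R := by
        rw [hzT]
        exact mul_le_mul_of_nonneg_left (by linarith [abs_le.2 hη]) (by positivity)

/-- Theorem 5.6: existence of a closed solution of the Abel equation (1.1) on `[t₀, T]` by
comparison with solutions `y₁` of (2.1) and `y₂` of (3.10), under `a < 0` a.e.,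
integrability of `b²/a`, and the integral conditions (ii), (iii). -/
theorem stmt_16 (t₀ T : ℝ) (hT : t₀ < T)
    (a b c d a₁ b₁ c₁ d₁ a₂ b₂ c₂ d₂ y₁ y₂ : ℝ → ℝ)
    (ha : ContinuousOn a (Icc t₀ T)) (hb : ContinuousOn b (Icc t₀ T))
    (hc : ContinuousOn c (Icc t₀ T)) (hd : ContinuousOn d (Icc t₀ T))
    (ha₁ : ContinuousOn a₁ (Icc t₀ T)) (hb₁ : ContinuousOn b₁ (Icc t₀ T))
    (hc₁ : ContinuousOn c₁ (Icc t₀ T)) (hd₁ : ContinuousOn d₁ (Icc t₀ T))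
    (ha₂ : ContinuousOn a₂ (Icc t₀ T)) (hb₂ : ContinuousOn b₂ (Icc t₀ T))
    (hc₂ : ContinuousOn c₂ (Icc t₀ T)) (hd₂ : ContinuousOn d₂ (Icc t₀ T))
    (hy₁ : IsAbelSolOn a₁ b₁ c₁ d₁ y₁ (Icc t₀ T))
    (hy₂ : IsAbelSolOn a₂ b₂ c₂ d₂ y₂ (Icc t₀ T))
    (h12 : y₁ t₀ ≤ y₂ t₀) (h1T : y₁ T ≤ y₁ t₀) (h2T : y₂ t₀ ≤ y₂ T)
    (haneg : ∀ᵐ t ∂(volume.restrict (Icc t₀ T)), a t < 0)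
    (hint : IntegrableOn (fun t => b t ^ 2 / a t) (Icc t₀ T))
    (γ₁ : ℝ) (hγ₁ : γ₁ ∈ Icc (y₁ t₀) (y₂ t₀))
    (hii : ∀ t ∈ Icc t₀ T,
      0 ≤ γ₁ - y₁ t₀ + ∫ τ in t₀..t,
        Real.exp (∫ s in t₀..τ, (c s - b s ^ 2 / a s)) *
          ((a₁ τ - a τ) * y₁ τ ^ 3 + (b₁ τ - b τ) * y₁ τ ^ 2 +
            (c₁ τ - c τ) * y₁ τ + (d₁ τ - d τ)))
    (γ₂ : ℝ) (hγ₂ : γ₂ ∈ Icc γ₁ (y₂ t₀))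
    (hiii : ∀ t ∈ Icc t₀ T,
      γ₂ - y₂ t₀ + (∫ τ in t₀..t,
        Real.exp (∫ s in t₀..τ, (c s - b s ^ 2 / a s)) *
          ((a₂ τ - a τ) * y₂ τ ^ 3 + (b₂ τ - b τ) * y₂ τ ^ 2 +
            (c₂ τ - c τ) * y₂ τ + (d₂ τ - d τ))) ≤ 0) :
    ∃ y : ℝ → ℝ, IsAbelSolOn a b c d y (Icc t₀ T) ∧ y t₀ = y T :=
  stmt_16_general t₀ T hT a b c d ha hb hc hd haneg hint
end
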